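/- arXiv:1609.09493 — 2 statements merged into one kernel-verified Lean document; each statement's English description precedes it below -/
import Mathlib

section
/- Dimension of the double ansatz space: let P(λ) be a regular or singular n×n matrix polynomial of degree k ≥ 2. Viewing a kn×kn matrix pencil ℒ(λ) = Xλ + Y as the pair (X, Y) of kn×kn real matrices, 𝔻𝕄(P) = 𝕄₁(P) ∩ 𝕄₂(P) is a real linear subspace of the space of kn×kn matrix pencils with dim 𝔻𝕄(P) = k. -/
open Polynomial Matrix

noncomputable section

/-- `Φ_k(λ) ⊗ I_n` as a `kn × n` polynomial matrix: its `i`-th block row (0-based)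
is `φ_{k-1-i}(λ) I_n`. -/
def PhiMat (n k : ℕ) (φ : ℕ → Polynomial ℝ) :
    Matrix (Fin k × Fin n) (Fin n) (Polynomial ℝ) :=
  Matrix.of fun p s => if p.2 = s then φ (k - 1 - p.1.val) else 0

/-- The matrix polynomial `P(λ) = Σ_{i=0}^k P_i φ_i(λ)`. -/
def matP (n k : ℕ) (φ : ℕ → Polynomial ℝ) (Pm : ℕ → Matrix (Fin n) (Fin n) ℝ) :
    Matrix (Fin n) (Fin n) (Polynomial ℝ) :=
  Matrix.of fun r s => ∑ i ∈ Finset.range (k + 1), C (Pm i r s) * φ i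

/-- `v ⊗ Q` as a `kn × n` polynomial matrix. -/
def vKron (n k : ℕ) (v : Fin k → ℝ) (Q : Matrix (Fin n) (Fin n) (Polynomial ℝ)) :
    Matrix (Fin k × Fin n) (Fin n) (Polynomial ℝ) :=
  Matrix.of fun p s => C (v p.1) * Q p.2 s

/-- `v^T ⊗ Q` as an `n × kn` polynomial matrix. -/
def vKronRow (n k : ℕ) (v : Fin k → ℝ) (Q : Matrix (Fin n) (Fin n) (Polynomial ℝ)) :
    Matrix (Fin n) (Fin k × Fin n) (Polynomial ℝ) :=
  Matrix.of fun s q => C (v q.1) * Q s q.2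

/-- A matrix pencil: a matrix polynomial each of whose entries has degree at most `1`. -/
def IsPencil {m m' : Type*} (L : Matrix m m' (Polynomial ℝ)) : Prop :=
  ∀ p q, (L p q).degree ≤ 1

/-- `ℒ(λ) ∈ 𝕄₁(P)` with ansatz vector `v`, i.e. `ℒ(λ)(Φ_k(λ) ⊗ I_n) = v ⊗ P(λ)`. -/
def Ansatz1 (n k : ℕ) (φ : ℕ → Polynomial ℝ) (Pm : ℕ → Matrix (Fin n) (Fin n) ℝ)
    (L : Matrix (Fin k × Fin n) (Fin k × Fin n) (Polynomial ℝ)) (v : Fin k → ℝ) : Prop :=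
  L * PhiMat n k φ = vKron n k v (matP n k φ Pm)

/-- `ℒ(λ) ∈ 𝕄₂(P)` with ansatz vector `w`, i.e. `(Φ_k(λ)^T ⊗ I_n) ℒ(λ) = w^T ⊗ P(λ)`. -/
def Ansatz2 (n k : ℕ) (φ : ℕ → Polynomial ℝ) (Pm : ℕ → Matrix (Fin n) (Fin n) ℝ)
    (L : Matrix (Fin k × Fin n) (Fin k × Fin n) (Polynomial ℝ)) (w : Fin k → ℝ) : Prop :=
  (PhiMat n k φ)ᵀ * L = vKronRow n k w (matP n k φ Pm)

/-- The anchor pencil `F_Φ^P(λ) = [m_Φ^P(λ); M_Φ(λ)]`. -/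
def FPhi (n k : ℕ) (a b c : ℕ → ℝ) (Pm : ℕ → Matrix (Fin n) (Fin n) ℝ) :
    Matrix (Fin k × Fin n) (Fin k × Fin n) (Polynomial ℝ) :=
  Matrix.of fun p q =>
    if p.1.val = 0 then
      -- the block row m_Φ^P(λ)
      if q.1.val = 0 then
        C ((a (k - 1))⁻¹) * (X - C (b (k - 1))) * C (Pm k p.2 q.2) + C (Pm (k - 1) p.2 q.2)
      else if q.1.val = 1 then
        C (Pm (k - 2) p.2 q.2) - C (c (k - 1) / a (k - 1)) * C (Pm k p.2 q.2)
      else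
        C (Pm (k - 1 - q.1.val) p.2 q.2)
    else
      -- the block rows M_Φ(λ) = M_Φ^⋆(λ) ⊗ I_n
      (if q.1.val + 1 = p.1.val then -C (a (k - 1 - p.1.val))
       else if q.1.val = p.1.val then X - C (b (k - 1 - p.1.val))
       else if q.1.val = p.1.val + 1 then -C (c (k - 1 - p.1.val))
       else 0) * (if p.2 = q.2 then 1 else 0)

/-- The `kn × kn` real matrix `[v ⊗ I_n, B]`: first `n` columns form `v ⊗ I_n`,
the remaining `(k-1)n` columns form `B`. -/
def extCols (n k : ℕ) (v : Fin k → ℝ)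
    (B : Matrix (Fin k × Fin n) (Fin (k - 1) × Fin n) ℝ) :
    Matrix (Fin k × Fin n) (Fin k × Fin n) ℝ :=
  Matrix.of fun p q =>
    if h : q.1.val = 0 then (if p.2 = q.2 then v p.1 else 0)
    else B p (⟨q.1.val - 1, by have := q.1.isLt; omega⟩, q.2)

/-- The `kn × kn` real matrix `[w^T ⊗ I_n; B]`: first `n` rows form `w^T ⊗ I_n`,
the remaining `(k-1)n` rows form `B`. -/
def extRows (n k : ℕ) (w : Fin k → ℝ)
    (B : Matrix (Fin (k - 1) × Fin n) (Fin k × Fin n) ℝ) :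
    Matrix (Fin k × Fin n) (Fin k × Fin n) ℝ :=
  Matrix.of fun p q =>
    if h : p.1.val = 0 then (if p.2 = q.2 then w q.1 else 0)
    else B (⟨p.1.val - 1, by have := p.1.isLt; omega⟩, p.2) q

/-- A real matrix viewed as a constant matrix polynomial. -/
def liftC {m m' : Type*} (A : Matrix m m' ℝ) : Matrix m m' (Polynomial ℝ) :=
  A.map C

/-- Block transpose of a matrix consisting of `n × n` blocks: block `(i,j)` of `A^𝓑`
is block `(j,i)` of `A`. -/
def blockTr {n k1 k2 : ℕ} {R : Type*} (A : Matrix (Fin k1 × Fin n) (Fin k2 × Fin n) R) :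
    Matrix (Fin k2 × Fin n) (Fin k1 × Fin n) R :=
  Matrix.of fun p q => A (q.1, p.2) (p.1, q.2)

/-- `rev_d Q(λ) = λ^d Q(1/λ)`, entrywise reversal of a matrix polynomial of degree at most `d`. -/
def revMat {m m' : Type*} (d : ℕ) (L : Matrix m m' (Polynomial ℝ)) :
    Matrix m m' (Polynomial ℝ) :=
  Matrix.of fun p q => (L p q).reflect d

/-- Evaluation of a real matrix polynomial at a complex number. -/
def evalC {m m' : Type*} (α : ℂ) (L : Matrix m m' (Polynomial ℝ)) : Matrix m m' ℂ :=
  Matrix.of fun p q => aeval α (L p q)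

/-- A matrix polynomial viewed as a matrix over the field `ℝ(λ)` of rational functions. -/
def liftRat {m m' : Type*} (L : Matrix m m' (Polynomial ℝ)) : Matrix m m' (RatFunc ℝ) :=
  L.map (algebraMap (Polynomial ℝ) (RatFunc ℝ))

/-- `v ⊗ I_n` as a `kn × n` complex matrix. -/
def vKronC (n k : ℕ) (v : Fin k → ℝ) : Matrix (Fin k × Fin n) (Fin n) ℂ :=
  Matrix.of fun p s => if p.2 = s then (v p.1 : ℂ) else 0

/-- `v ⊗ I_n` as a `kn × n` matrix over `ℝ(λ)`. -/
def vKronRat (n k : ℕ) (v : Fin k → ℝ) : Matrix (Fin k × Fin n) (Fin n) (RatFunc ℝ) :=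
  Matrix.of fun p s => if p.2 = s then RatFunc.C (v p.1) else 0

/-- The pencil `Xm λ + Ym` as a matrix polynomial. -/
def pencilPoly {m : Type*} (Xm Ym : Matrix m m ℝ) : Matrix m m (Polynomial ℝ) :=
  Matrix.of fun p q => C (Xm p q) * X + C (Ym p q)

/-- `diag(P(λ), I_{(k-1)n})` as a `kn × kn` matrix polynomial. -/
def diagPI (n k : ℕ) (Pp : Matrix (Fin n) (Fin n) (Polynomial ℝ)) :
    Matrix (Fin k × Fin n) (Fin k × Fin n) (Polynomial ℝ) :=
  Matrix.of fun p q =>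
    if p.1.val = 0 ∧ q.1.val = 0 then Pp p.2 q.2 else if p = q then 1 else 0

/-- `ℒ(λ)` is a linearization of `P(λ)`: there are `U(λ), V(λ)` with nonzero real constant
determinants such that `U(λ)ℒ(λ)V(λ) = diag(P(λ), I_{(k-1)n})`. -/
def IsLinearization (n k : ℕ)
    (L : Matrix (Fin k × Fin n) (Fin k × Fin n) (Polynomial ℝ))
    (Pp : Matrix (Fin n) (Fin n) (Polynomial ℝ)) : Prop :=
  ∃ U V : Matrix (Fin k × Fin n) (Fin k × Fin n) (Polynomial ℝ),
    (∃ cu : ℝ, cu ≠ 0 ∧ U.det = C cu) ∧ (∃ cv : ℝ, cv ≠ 0 ∧ V.det = C cv) ∧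
    U * L * V = diagPI n k Pp

/-- `ℒ(λ)` is a strong linearization of `P(λ)` (of degree `k`): it is a linearization and
`rev₁ ℒ(λ)` is a linearization of `rev_k P(λ)`. -/
def IsStrongLin (n k : ℕ)
    (L : Matrix (Fin k × Fin n) (Fin k × Fin n) (Polynomial ℝ))
    (Pp : Matrix (Fin n) (Fin n) (Polynomial ℝ)) : Prop :=
  IsLinearization n k L Pp ∧ IsLinearization n k (revMat 1 L) (revMat k Pp)




/-- Generic independence: family with degrees `m` and unit leading coeffs. -/
theorem indepAux {R : Type*} [CommRing R] (F : ℕ → Polynomial R)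
    (hdeg : ∀ m, (F m).degree = (m : ℕ)) (hu : ∀ m, IsUnit ((F m).coeff m)) :
    ∀ (N : ℕ) (r : ℕ → R), (∑ t ∈ Finset.range N, C (r t) * F t) = 0 → ∀ t < N, r t = 0 := by
  intro N
  induction N with
  | zero => intro r _ t ht; omega
  | succ N ih =>
    intro r hsum t ht
    have htop : r N = 0 := by
      have h1 : (∑ t ∈ Finset.range (N+1), C (r t) * F t).coeff N = 0 := by rw [hsum]; simp
      rw [finset_sum_coeff] at h1
      have h2 : ∀ t ∈ Finset.range (N+1), (C (r t) * F t).coeff N = if t = N then r N * (F N).coeff N else 0 := by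
        intro s hs
        rcases eq_or_ne s N with rfl | hne
        · simp [coeff_C_mul]
        · rw [if_neg hne, coeff_C_mul]
          have : (F s).degree < (N : ℕ) := by
            rw [hdeg s]
            exact_mod_cast lt_of_le_of_ne (by exact_mod_cast Nat.lt_succ_iff.mp (Finset.mem_range.mp hs)) (by exact_mod_cast hne)
          rw [coeff_eq_zero_of_degree_lt this, mul_zero]
      rw [Finset.sum_congr rfl h2, Finset.sum_ite_eq' (Finset.range (N+1)) N] at h1
      simp only [Finset.mem_range, Nat.lt_succ_self, if_true] at h1
      exact (IsUnit.mul_left_eq_zero (hu N)).mp h1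
    have hrest : (∑ t ∈ Finset.range N, C (r t) * F t) = 0 := by
      have := hsum
      rw [Finset.sum_range_succ, htop, map_zero, zero_mul, add_zero] at this
      exact this
    rcases Nat.lt_succ_iff_lt_or_eq.mp ht with h | rfl
    · exact ih r hrest t h
    · exact htop

/-- Generic expansion in a degree-graded family. -/
theorem expandAux {R : Type*} [CommRing R] (F : ℕ → Polynomial R)
    (hdeg : ∀ m, (F m).degree = (m : ℕ)) (hu : ∀ m, IsUnit ((F m).coeff m)) :
    ∀ (N : ℕ) (f : Polynomial R), (∀ i, N ≤ i → f.coeff i = 0) →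
      ∃ r : ℕ → R, f = ∑ t ∈ Finset.range N, C (r t) * F t := by
  intro N
  induction N with
  | zero =>
    intro f hf
    exact ⟨0, by ext i; simpa using hf i (Nat.zero_le i)⟩
  | succ N ih =>
    intro f hf
    obtain ⟨u, hu'⟩ := hu N
    set t0 : R := f.coeff N * ↑u⁻¹ with ht0
    have hg : ∀ i, N ≤ i → (f - C t0 * F N).coeff i = 0 := by
      intro i hi
      rcases eq_or_lt_of_le hi with rfl | hlt
      · simp only [coeff_sub, coeff_C_mul, ← hu', ht0]
        rw [mul_assoc]
        simp
      · simp only [coeff_sub, coeff_C_mul]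
        rw [hf i hlt, coeff_eq_zero_of_degree_lt (by rw [hdeg N]; exact_mod_cast hlt), mul_zero, sub_zero]
    obtain ⟨r, hr⟩ := ih (f - C t0 * F N) hg
    refine ⟨fun t => if t = N then t0 else r t, ?_⟩
    rw [Finset.sum_range_succ]
    simp only [eq_self_iff_true, if_true]
    have heq : ∑ t ∈ Finset.range N, C (if t = N then t0 else r t) * F t
        = ∑ t ∈ Finset.range N, C (r t) * F t := by
      refine Finset.sum_congr rfl fun t ht => ?_
      rw [if_neg (by have := Finset.mem_range.mp ht; omega)]
    rw [heq, ← hr]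
    ring


section PhiFacts

variable (a b c : ℕ → ℝ) (φ : ℕ → Polynomial ℝ)
variable (ha : ∀ j, a j ≠ 0) (hφ0 : φ 0 = 1)
  (hφ1 : C (a 0) * φ 1 = (X - C (b 0)) * φ 0)
  (hφrec : ∀ j, C (a (j + 1)) * φ (j + 2) =
      (X - C (b (j + 1))) * φ (j + 1) - C (c (j + 1)) * φ j)

include ha hφ0 hφ1 hφrec

theorem degφ : ∀ m, (φ m).degree = (m : ℕ) := by
  intro m
  induction m using Nat.strong_induction_on with
  | _ m ih =>
    match m with
    | 0 => rw [hφ0]; exact degree_one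
    | 1 =>
      have h : (C (a 0) * φ 1).degree = 1 := by
        rw [hφ1, hφ0, mul_one, degree_X_sub_C]
      rwa [degree_mul, degree_C (ha 0), zero_add] at h
    | (j+2) =>
      have h1 : ((X - C (b (j+1))) * φ (j+1)).degree = ((j + 2 : ℕ) : WithBot ℕ) := by
        rw [degree_mul, degree_X_sub_C, ih (j+1) (by omega)]
        push_cast; ring
      have h2 : (C (c (j+1)) * φ j).degree < ((j + 2 : ℕ) : WithBot ℕ) := by
        calc (C (c (j+1)) * φ j).degree ≤ (C (c (j+1))).degree + (φ j).degree := degree_mul_le _ _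
          _ ≤ 0 + (φ j).degree := by gcongr; exact degree_C_le
          _ = (j : ℕ) := by rw [zero_add, ih j (by omega)]
          _ < ((j + 2 : ℕ) : WithBot ℕ) := by exact_mod_cast by omega
      have h : (C (a (j+1)) * φ (j+2)).degree = ((j + 2 : ℕ) : WithBot ℕ) := by
        rw [hφrec j, degree_sub_eq_left_of_degree_lt (by rw [h1]; exact h2), h1]
      rw [degree_mul, degree_C (ha (j+1)), zero_add] at h
      exact_mod_cast h

theorem coeffφ_unit : ∀ m, IsUnit ((φ m).coeff m) := by
  intro m
  exact isUnit_iff_ne_zero.mpr (coeff_ne_zero_of_eq_degree (degφ a b c φ ha hφ0 hφ1 hφrec m))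

theorem indepφ (N : ℕ) (r : ℕ → ℝ) (h : (∑ t ∈ Finset.range N, C (r t) * φ t) = 0) :
    ∀ t < N, r t = 0 :=
  indepAux φ (degφ a b c φ ha hφ0 hφ1 hφrec) (coeffφ_unit a b c φ ha hφ0 hφ1 hφrec) N r h

theorem Xφ (m : ℕ) : X * φ m = C (a m) * φ (m+1) + C (b m) * φ m
    + C (c m) * (if m = 0 then 0 else φ (m-1)) := by
  match m with
  | 0 =>
    rw [if_pos rfl]
    norm_num
    linear_combination -hφ1
  | (j+1) =>
    rw [if_neg (by omega)]
    have := hφrec j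
    have hj : j + 1 - 1 = j := by omega
    rw [hj]
    linear_combination -this

end PhiFacts
section SumExp

variable (k : ℕ) (a b c : ℕ → ℝ) (φ : ℕ → Polynomial ℝ)

/-- Collected coefficient of `φ t` in `∑ (u m λ + w m) φ m`. -/
def gcoef (u w : ℕ → ℝ) (t : ℕ) : ℝ :=
  (if t = 0 then 0 else a (t - 1) * u (t - 1)) + b t * u t + c (t + 1) * u (t + 1) + w t

variable (ha : ∀ j, a j ≠ 0) (hφ0 : φ 0 = 1)
  (hφ1 : C (a 0) * φ 1 = (X - C (b 0)) * φ 0)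
  (hφrec : ∀ j, C (a (j + 1)) * φ (j + 2) =
      (X - C (b (j + 1))) * φ (j + 1) - C (c (j + 1)) * φ j)

include ha hφ0 hφ1 hφrec

theorem sumexp (u w : ℕ → ℝ) (hu : ∀ m, k ≤ m → u m = 0) (hw : ∀ m, k ≤ m → w m = 0) :
    ∑ m ∈ Finset.range k, (C (u m) * X + C (w m)) * φ m
      = ∑ t ∈ Finset.range (k + 1), C (gcoef a b c u w t) * φ t := by
  have hXφ := Xφ a b c φ ha hφ0 hφ1 hφrec
  have step1 : ∀ m, (C (u m) * X + C (w m)) * φ m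
      = C (a m * u m) * φ (m+1) + C (b m * u m) * φ m
        + C (c m * u m) * (if m = 0 then 0 else φ (m-1)) + C (w m) * φ m := by
    intro m
    have h2 : C (u m) * (X * φ m) = C (u m) * (C (a m) * φ (m+1) + C (b m) * φ m
        + C (c m) * (if m = 0 then 0 else φ (m-1))) := by rw [hXφ m]
    simp only [C_mul]
    linear_combination h2
  rw [Finset.sum_congr rfl (fun m _ => step1 m)]
  have T1 : ∑ m ∈ Finset.range k, C (a m * u m) * φ (m+1)
      = ∑ t ∈ Finset.range (k+1), C (if t = 0 then 0 else a (t-1) * u (t-1)) * φ t := by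
    rw [Finset.sum_range_succ' (fun t => C (if t = 0 then 0 else a (t-1) * u (t-1)) * φ t) k]
    norm_num
  have T2 : ∑ m ∈ Finset.range k, C (b m * u m) * φ m
      = ∑ t ∈ Finset.range (k+1), C (b t * u t) * φ t := by
    rw [Finset.sum_range_succ, hu k le_rfl, mul_zero, map_zero, zero_mul, add_zero]
  have T4 : ∑ m ∈ Finset.range k, C (w m) * φ m
      = ∑ t ∈ Finset.range (k+1), C (w t) * φ t := by
    rw [Finset.sum_range_succ, hw k le_rfl, map_zero, zero_mul, add_zero]
  have T3 : ∑ m ∈ Finset.range k, C (c m * u m) * (if m = 0 then 0 else φ (m-1))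
      = ∑ t ∈ Finset.range (k+1), C (c (t+1) * u (t+1)) * φ t := by
    have e1 : ∑ m ∈ Finset.range k, C (c m * u m) * (if m = 0 then 0 else φ (m-1))
        = ∑ m ∈ Finset.range (k+2), C (c m * u m) * (if m = 0 then 0 else φ (m-1)) := by
      refine Finset.sum_subset (by intro x hx; simp only [Finset.mem_range] at *; omega) ?_
      intro m _ hm
      rw [hu m (by simp only [Finset.mem_range] at hm; omega), mul_zero, map_zero, zero_mul]
    rw [e1, Finset.sum_range_succ' (fun m => C (c m * u m) * (if m = 0 then 0 else φ (m-1))) (k+1)]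
    norm_num
  rw [Finset.sum_add_distrib, Finset.sum_add_distrib, Finset.sum_add_distrib, T1, T2, T3, T4,
    ← Finset.sum_add_distrib, ← Finset.sum_add_distrib, ← Finset.sum_add_distrib]
  refine Finset.sum_congr rfl fun t _ => ?_
  unfold gcoef
  simp only [C_add]
  ring

theorem rowchar (u w : ℕ → ℝ) (hu : ∀ m, k ≤ m → u m = 0) (hw : ∀ m, k ≤ m → w m = 0)
    (ρ : ℕ → ℝ)
    (heq : ∑ m ∈ Finset.range k, (C (u m) * X + C (w m)) * φ m
      = ∑ t ∈ Finset.range (k + 1), C (ρ t) * φ t) :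
    ∀ t < k + 1, gcoef a b c u w t = ρ t := by
  intro t ht
  have h0 : ∑ t ∈ Finset.range (k+1), C (gcoef a b c u w t - ρ t) * φ t = 0 := by
    simp only [map_sub, sub_mul, Finset.sum_sub_distrib]
    rw [← sumexp k a b c φ ha hφ0 hφ1 hφrec u w hu hw, heq, sub_self]
  have := indepφ a b c φ ha hφ0 hφ1 hφrec (k+1) _ h0 t ht
  linarith [this]

end SumExp

section Core

theorem coreZero (k : ℕ) (a b c : ℕ → ℝ) (ha : ∀ j, a j ≠ 0) (A : ℕ → ℕ → ℝ)
    (hout : ∀ p q, k ≤ p ∨ k ≤ q → A p q = 0)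
    (hrow : ∀ p, A p (k-1) = 0) (hcol : ∀ q, A (k-1) q = 0)
    (hrel : ∀ p q, p < k → q < k →
      (if q = 0 then 0 else a (q-1) * A p (q-1)) + b q * A p q + c (q+1) * A p (q+1)
      = (if p = 0 then 0 else a (p-1) * A (p-1) q) + b p * A p q + c (p+1) * A (p+1) q) :
    ∀ p q, A p q = 0 := by
  have main : ∀ d p q, k - 1 - d ≤ p ∨ k - 1 - d ≤ q → A p q = 0 := by
    intro d
    induction d with
    | zero =>
      intro p q hpq
      rcases hpq with h | h
      · rcases eq_or_lt_of_le h with rfl | h'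
        · exact hcol q
        · exact hout p q (by omega)
      · rcases eq_or_lt_of_le h with rfl | h'
        · exact hrow p
        · exact hout p q (by omega)
    | succ d ih =>
      intro p q hpq
      set M := k - 1 - d with hM
      rcases Nat.lt_or_ge k (d + 2) with hk | hk
      · exact ih p q (by omega)
      · have hM1 : k - 1 - (d+1) = M - 1 := by omega
        have hq0 : ∀ p, A p (M-1) = 0 := by
          intro p
          rcases Nat.lt_or_ge p k with hpk | hpk
          · have hrel' := hrel p M (by omega) (by omega)
            rw [if_neg (show ¬ (M = 0) by omega)] at hrel'
            have hMM : M - 1 + 1 = M := by omega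
            have e1 : A p M = 0 := ih p M (by omega)
            have e2 : A p (M+1) = 0 := ih p (M+1) (by omega)
            have e4 : A (p+1) M = 0 := ih (p+1) M (by omega)
            rw [e1, e2, e4] at hrel'
            have hz : a (M-1) * A p (M-1) = 0 := by
              rcases Nat.eq_zero_or_pos p with rfl | hp
              · rw [if_pos rfl] at hrel'
                linarith [hrel']
              · rw [if_neg (by omega), ih (p-1) M (by omega)] at hrel'
                linarith [hrel']
            exact (mul_eq_zero.mp hz).resolve_left (ha (M-1))
          · exact hout p (M-1) (by omega)
        have hp0 : ∀ q, A (M-1) q = 0 := by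
          intro q
          rcases Nat.lt_or_ge q k with hqk | hqk
          · have hrel' := hrel M q (by omega) (by omega)
            rw [if_neg (show ¬ (M = 0) by omega)] at hrel'
            have e1 : A M q = 0 := ih M q (by omega)
            have e2 : A (M+1) q = 0 := ih (M+1) q (by omega)
            rw [e1, e2] at hrel'
            have hz : a (M-1) * A (M-1) q = 0 := by
              rcases Nat.eq_zero_or_pos q with rfl | hq
              · rw [if_pos rfl] at hrel'
                rw [ih M 1 (by omega)] at hrel'
                linarith [hrel']
              · rw [if_neg (by omega), ih M (q-1) (by omega), ih M (q+1) (by omega)] at hrel'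
                linarith [hrel']
            exact (mul_eq_zero.mp hz).resolve_left (ha (M-1))
          · exact hout (M-1) q (by omega)
        rw [hM1] at hpq
        rcases hpq with h | h
        · rcases eq_or_lt_of_le h with rfl | h'
          · exact hp0 q
          · exact ih p q (by omega)
        · rcases eq_or_lt_of_le h with rfl | h'
          · exact hq0 p
          · exact ih p q (by omega)
  intro p q
  exact main (k-1) p q (by omega)

end Core
section Swap

/-- The involution of `ℝ[x][y]` exchanging the two variables. -/
def swapRH : Polynomial (Polynomial ℝ) →+* Polynomial (Polynomial ℝ) :=
  eval₂RingHom (mapRingHom (C : ℝ →+* Polynomial ℝ)) (C X)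

theorem swap_C (f : Polynomial ℝ) : swapRH (C f) = map C f := by
  simp [swapRH]

theorem swap_X : swapRH X = C X := by
  simp [swapRH]

theorem swap_mapC (p : Polynomial ℝ) : swapRH (map C p) = C p := by
  have h : swapRH.comp (mapRingHom (C : ℝ →+* Polynomial ℝ))
      = (C : Polynomial ℝ →+* Polynomial (Polynomial ℝ)) := by
    apply ringHom_ext
    · intro r
      simp only [RingHom.comp_apply, coe_mapRingHom, map_C, swap_C]
    · simp only [RingHom.comp_apply, coe_mapRingHom, map_X, swap_X]
  calc swapRH (map C p) = swapRH.comp (mapRingHom (C : ℝ →+* Polynomial ℝ)) p := by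
        simp [RingHom.comp_apply]
    _ = C p := by rw [h]

theorem coeff_swap (f : Polynomial (Polynomial ℝ)) (aa bb : ℕ) :
    ((swapRH f).coeff aa).coeff bb = (f.coeff bb).coeff aa := by
  induction f using Polynomial.induction_on' with
  | add p q hp hq => simp [hp, hq]
  | monomial nn t =>
    rw [← C_mul_X_pow_eq_monomial, _root_.map_mul, _root_.map_pow, swap_C, swap_X, ← _root_.map_pow]
    rw [mul_comm, coeff_C_mul, coeff_map]
    simp only [coeff_C_mul, coeff_mul_C, coeff_X_pow]
    by_cases h : bb = nn <;> simp [h]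

end Swap
section Exist

variable (k : ℕ) (a b c : ℕ → ℝ) (φ : ℕ → Polynomial ℝ)
variable (ha : ∀ j, a j ≠ 0) (hφ0 : φ 0 = 1)
  (hφ1 : C (a 0) * φ 1 = (X - C (b 0)) * φ 0)
  (hφrec : ∀ j, C (a (j + 1)) * φ (j + 2) =
      (X - C (b (j + 1))) * φ (j + 1) - C (c (j + 1)) * φ j)

include ha hφ0 hφ1 hφrec

theorem mapCdeg : ∀ m, (Polynomial.map (C : ℝ →+* Polynomial ℝ) (φ m)).degree = (m : ℕ) := by
  intro m
  rw [degree_map_eq_of_injective (C_injective)]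
  exact degφ a b c φ ha hφ0 hφ1 hφrec m

theorem mapCunit : ∀ m, IsUnit ((Polynomial.map (C : ℝ →+* Polynomial ℝ) (φ m)).coeff m) := by
  intro m
  rw [coeff_map]
  exact isUnit_C.mpr (coeffφ_unit a b c φ ha hφ0 hφ1 hφrec m)

theorem ext1 (N : ℕ) (s : ℕ → Polynomial ℝ)
    (h : ∑ i ∈ Finset.range N, C (φ i) * Polynomial.map (C : ℝ →+* Polynomial ℝ) (s i) = 0) :
    ∀ i < N, s i = 0 := by
  intro i hi
  ext bb
  have hb : ∑ i ∈ Finset.range N, C ((s i).coeff bb) * φ i = 0 := by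
    have h2 := congrArg (fun f => Polynomial.coeff f bb) h
    simp only [finset_sum_coeff, coeff_C_mul, coeff_map, coeff_zero] at h2
    rw [← h2]
    exact Finset.sum_congr rfl fun i _ => mul_comm _ _
  simpa using indepφ a b c φ ha hφ0 hφ1 hφrec N _ hb i hi

theorem scalarExist (hk : 1 ≤ k) (vv : ℕ → ℝ) (p : Polynomial ℝ) (hp : p.degree ≤ (k : ℕ)) :
    ∃ A B : ℕ → ℕ → ℝ,
      (∀ i < k, ∑ j ∈ Finset.range k, (C (A i j) * X + C (B i j)) * φ j = C (vv i) * p) ∧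
      (∀ j < k, ∑ i ∈ Finset.range k, (C (A i j) * X + C (B i j)) * φ i = C (vv j) * p) := by
  classical
  set ν : Polynomial ℝ := ∑ m ∈ Finset.range k, C (vv m) * φ m with hνdef
  have hν : ν.degree ≤ ((k - 1 : ℕ) : WithBot ℕ) := by
    refine le_trans (degree_sum_le _ _) (Finset.sup_le fun m hm => ?_)
    calc (C (vv m) * φ m).degree ≤ (C (vv m)).degree + (φ m).degree := degree_mul_le _ _
      _ ≤ 0 + (φ m).degree := by gcongr; exact degree_C_le
      _ = (m : ℕ) := by rw [zero_add, degφ a b c φ ha hφ0 hφ1 hφrec m]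
      _ ≤ ((k - 1 : ℕ) : WithBot ℕ) := by
          exact_mod_cast Nat.le_sub_one_of_lt (Finset.mem_range.mp hm)
  set h1 : Polynomial (Polynomial ℝ) := C ν * p.map C - C p * ν.map C with h1def
  set h2 : Polynomial (Polynomial ℝ) := X * (ν.map C * C p) - C X * (C ν * p.map C) with h2def
  have hev : ∀ g : Polynomial ℝ, eval (X : Polynomial ℝ) (Polynomial.map (C : ℝ →+* Polynomial ℝ) g) = g := by
    intro g; rw [eval_map, eval₂_C_X]
  have hXC_ne : (X - C (X : Polynomial ℝ)) ≠ 0 := by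
    intro hcontra
    have := congrArg (fun f => Polynomial.coeff f 1) hcontra
    simp at this
  -- divisibility
  obtain ⟨q, hq⟩ : (X - C (X : Polynomial ℝ)) ∣ h1 := by
    refine dvd_iff_isRoot.mpr ?_
    simp only [IsRoot, h1def, eval_sub, eval_mul, eval_C, hev]
    ring
  obtain ⟨q2, hq2⟩ : (X - C (X : Polynomial ℝ)) ∣ h2 := by
    refine dvd_iff_isRoot.mpr ?_
    simp only [IsRoot, h2def, eval_sub, eval_mul, eval_C, eval_X, hev]
    ring
  -- degree bounds
  have hdeg1 : h1.degree ≤ (k : ℕ) := by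
    have b1 : (C ν * Polynomial.map (C : ℝ →+* Polynomial ℝ) p).degree ≤ (k : ℕ) :=
      le_trans (degree_mul_le _ _) (by
        calc (C ν).degree + (Polynomial.map (C : ℝ →+* Polynomial ℝ) p).degree
            ≤ 0 + p.degree := by gcongr; exacts [degree_C_le, degree_map_le]
          _ ≤ (k : ℕ) := by rw [zero_add]; exact hp)
    have b2 : (C p * Polynomial.map (C : ℝ →+* Polynomial ℝ) ν).degree ≤ (k : ℕ) :=
      le_trans (degree_mul_le _ _) (by
        calc (C p).degree + (Polynomial.map (C : ℝ →+* Polynomial ℝ) ν).degree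
            ≤ 0 + ν.degree := by gcongr; exacts [degree_C_le, degree_map_le]
          _ ≤ ((k - 1 : ℕ) : WithBot ℕ) := by rw [zero_add]; exact hν
          _ ≤ (k : ℕ) := by exact_mod_cast Nat.sub_le k 1)
    exact le_trans (degree_sub_le _ _) (max_le b1 b2)
  have hdeg2 : h2.degree ≤ (k : ℕ) := by
    have b1 : (X * (Polynomial.map (C : ℝ →+* Polynomial ℝ) ν * C p)).degree ≤ ((k:ℕ) : WithBot ℕ) := by
      refine le_trans (degree_mul_le _ _) ?_
      refine le_trans (add_le_add degree_X_le (degree_mul_le _ _)) ?_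
      calc 1 + ((Polynomial.map (C : ℝ →+* Polynomial ℝ) ν).degree + (C p).degree)
          ≤ 1 + (((k-1:ℕ) : WithBot ℕ) + 0) := by
            gcongr
            exacts [le_trans degree_map_le hν, degree_C_le]
        _ ≤ (k : ℕ) := by
            rw [add_zero]
            rw [show ((1:WithBot ℕ)) = ((1:ℕ) : WithBot ℕ) by norm_cast]
            rw [← Nat.cast_add]
            exact_mod_cast by omega
    have b2 : (C X * (C ν * Polynomial.map (C : ℝ →+* Polynomial ℝ) p)).degree ≤ ((k:ℕ) : WithBot ℕ) := by
      refine le_trans (degree_mul_le _ _) ?_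
      refine le_trans (add_le_add degree_C_le (degree_mul_le _ _)) ?_
      calc (0 : WithBot ℕ) + ((C ν).degree + (Polynomial.map (C : ℝ →+* Polynomial ℝ) p).degree)
          ≤ 0 + (0 + p.degree) := by gcongr; exacts [degree_C_le, degree_map_le]
        _ ≤ (k : ℕ) := by rw [zero_add, zero_add]; exact hp
    exact le_trans (degree_sub_le _ _) (max_le b1 b2)
  have hcoeff : ∀ (h' q' : Polynomial (Polynomial ℝ)), h' = (X - C (X : Polynomial ℝ)) * q' →
      h'.degree ≤ (k : ℕ) → ∀ i, k ≤ i → q'.coeff i = 0 := by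
    intro h' q' heq hdeg i hi
    rcases eq_or_ne q' 0 with rfl | hne
    · simp
    · have hdm : h'.degree = 1 + q'.degree := by
        rw [heq, degree_mul, degree_X_sub_C]
      have : 1 + q'.degree ≤ (k : ℕ) := by rw [← hdm]; exact hdeg
      rw [degree_eq_natDegree hne] at this
      have hnd : 1 + q'.natDegree ≤ k := by exact_mod_cast this
      exact coeff_eq_zero_of_natDegree_lt (by omega)
  have hqc : ∀ i, k ≤ i → q.coeff i = 0 := hcoeff h1 q hq hdeg1
  have hq2c : ∀ i, k ≤ i → q2.coeff i = 0 := hcoeff h2 q2 hq2 hdeg2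
  -- symmetry
  have hsym : ∀ (h' q' : Polynomial (Polynomial ℝ)), h' = (X - C (X : Polynomial ℝ)) * q' →
      swapRH h' = -h' → swapRH q' = q' := by
    intro h' q' heq hsw
    have e1 : swapRH h' = (C X - X) * swapRH q' := by
      rw [heq, _root_.map_mul, map_sub, swap_X, swap_C, map_X]
    have e2 : (X - C (X : Polynomial ℝ)) * swapRH q' = (X - C (X : Polynomial ℝ)) * q' := by
      have := e1.symm.trans hsw
      rw [← heq] at *
      linear_combination -this
    exact mul_left_cancel₀ hXC_ne e2
  have hswap1 : swapRH h1 = -h1 := by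
    simp only [h1def, map_sub, _root_.map_mul, swap_C, swap_mapC]
    ring
  have hswap2 : swapRH h2 = -h2 := by
    simp only [h2def, map_sub, _root_.map_mul, swap_C, swap_mapC, swap_X, Polynomial.map_X]
    ring
  have hqs : swapRH q = q := hsym h1 q hq hswap1
  have hq2s : swapRH q2 = q2 := hsym h2 q2 hq2 hswap2
  have hqc2 : ∀ bb aa, k ≤ aa → (q.coeff bb).coeff aa = 0 := by
    intro bb aa haa
    rw [← hqs, coeff_swap, hqc aa haa, coeff_zero]
  have hq2c2 : ∀ bb aa, k ≤ aa → (q2.coeff bb).coeff aa = 0 := by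
    intro bb aa haa
    rw [← hq2s, coeff_swap, hq2c aa haa, coeff_zero]
  -- expansion
  have FD := mapCdeg a b c φ ha hφ0 hφ1 hφrec
  have FU := mapCunit a b c φ ha hφ0 hφ1 hφrec
  obtain ⟨g, hg⟩ := expandAux _ FD FU k q hqc
  obtain ⟨g2, hg2⟩ := expandAux _ FD FU k q2 hq2c
  have hgc : ∀ q' (g' : ℕ → Polynomial ℝ),
      q' = ∑ t ∈ Finset.range k, C (g' t) * Polynomial.map (C : ℝ →+* Polynomial ℝ) (φ t) →
      (∀ bb aa, k ≤ aa → (q'.coeff bb).coeff aa = 0) →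
      ∀ j < k, ∀ aa, k ≤ aa → (g' j).coeff aa = 0 := by
    intro q' g' hq' hcc j hj aa haa
    have hPa : ∑ j ∈ Finset.range k, C ((g' j).coeff aa) * φ j = 0 := by
      ext bb
      rw [finset_sum_coeff, coeff_zero]
      have e1 : (q'.coeff bb).coeff aa = ∑ j ∈ Finset.range k, (g' j).coeff aa * (φ j).coeff bb := by
        rw [hq', finset_sum_coeff]
        simp only [coeff_C_mul, coeff_map]
        rw [finset_sum_coeff]
        simp only [coeff_mul_C]
      have e2 : (q'.coeff bb).coeff aa = 0 := hcc bb aa haa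
      rw [e2] at e1
      have e3 : ∀ j' ∈ Finset.range k, (C ((g' j').coeff aa) * φ j').coeff bb
          = (g' j').coeff aa * (φ j').coeff bb := fun j' _ => coeff_C_mul _
      rw [Finset.sum_congr rfl e3]
      exact e1.symm
    exact indepφ a b c φ ha hφ0 hφ1 hφrec k _ hPa j hj
  have hgb : ∀ j, j < k → ∀ aa, k ≤ aa → (g j).coeff aa = 0 := fun j hj => hgc q g hg hqc2 j hj
  have hg2b : ∀ j, j < k → ∀ aa, k ≤ aa → (g2 j).coeff aa = 0 := fun j hj => hgc q2 g2 hg2 hq2c2 j hj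
  have hexpA : ∀ j, ∃ r : ℕ → ℝ, (j < k → g j = ∑ i ∈ Finset.range k, C (r i) * φ i) := by
    intro j
    by_cases hj : j < k
    · obtain ⟨r, hr⟩ := expandAux φ (degφ a b c φ ha hφ0 hφ1 hφrec)
        (coeffφ_unit a b c φ ha hφ0 hφ1 hφrec) k (g j) (fun i hi => hgb j hj i hi)
      exact ⟨r, fun _ => hr⟩
    · exact ⟨0, fun h => absurd h hj⟩
  have hexpB : ∀ j, ∃ r : ℕ → ℝ, (j < k → g2 j = ∑ i ∈ Finset.range k, C (r i) * φ i) := by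
    intro j
    by_cases hj : j < k
    · obtain ⟨r, hr⟩ := expandAux φ (degφ a b c φ ha hφ0 hφ1 hφrec)
        (coeffφ_unit a b c φ ha hφ0 hφ1 hφrec) k (g2 j) (fun i hi => hg2b j hj i hi)
      exact ⟨r, fun _ => hr⟩
    · exact ⟨0, fun h => absurd h hj⟩
  choose Afun hAfun using hexpA
  choose Bfun hBfun using hexpB
  have hq' : C ν * p.map C - C p * ν.map C = (X - C (X : Polynomial ℝ)) * q := by
    rw [← h1def]; exact hq
  have hq2' : X * (ν.map C * C p) - C X * (C ν * p.map C) = (X - C (X : Polynomial ℝ)) * q2 := by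
    rw [← h2def]; exact hq2
  have id1 : X * q + q2 = C ν * p.map C := by
    apply mul_left_cancel₀ hXC_ne
    linear_combination (-(X : Polynomial (Polynomial ℝ))) * hq' - hq2'
  have id2 : C X * q + q2 = C p * ν.map C := by
    apply mul_left_cancel₀ hXC_ne
    linear_combination (-(C (X : Polynomial ℝ))) * hq' - hq2'
  have mapC_sum : ∀ (s : Finset ℕ) (f : ℕ → Polynomial ℝ),
      (∑ x ∈ s, f x).map (C : ℝ →+* Polynomial ℝ) = ∑ x ∈ s, (f x).map C := by
    intro s f
    simp only [← coe_mapRingHom, map_sum]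
  set Rfun : ℕ → Polynomial ℝ :=
    fun i => ∑ j ∈ Finset.range k, (C (Afun j i) * (X * φ j) + C (Bfun j i) * φ j) with hRdef
  set Sfun : ℕ → Polynomial ℝ :=
    fun j => ∑ i ∈ Finset.range k, (C (Afun j i) * (X * φ i) + C (Bfun j i) * φ i) with hSdef
  have claim1 : X * q + q2 = ∑ i ∈ Finset.range k, C (φ i) * (Rfun i).map C := by
    calc X * q + q2
        = ∑ j ∈ Finset.range k, (X * (C (g j) * (φ j).map C) + C (g2 j) * (φ j).map C) := by
          rw [hg, hg2, Finset.mul_sum, ← Finset.sum_add_distrib]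
      _ = ∑ j ∈ Finset.range k, ∑ i ∈ Finset.range k,
            (C (C (Afun j i)) * C (φ i) * (X * φ j).map C
              + C (C (Bfun j i)) * C (φ i) * (φ j).map C) := by
          refine Finset.sum_congr rfl fun j hj => ?_
          rw [hAfun j (Finset.mem_range.mp hj), hBfun j (Finset.mem_range.mp hj)]
          rw [_root_.map_sum (C : Polynomial ℝ →+* Polynomial (Polynomial ℝ)),
            _root_.map_sum (C : Polynomial ℝ →+* Polynomial (Polynomial ℝ)),
            Finset.sum_mul, Finset.mul_sum, Finset.sum_mul, ← Finset.sum_add_distrib]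
          refine Finset.sum_congr rfl fun i _ => ?_
          simp only [Polynomial.map_add, Polynomial.map_mul, Polynomial.map_X,
            Polynomial.map_C, _root_.map_mul]
          ring
      _ = ∑ i ∈ Finset.range k, C (φ i) * (Rfun i).map C := by
          rw [Finset.sum_comm]
          refine Finset.sum_congr rfl fun i _ => ?_
          simp only [hRdef]
          rw [mapC_sum, Finset.mul_sum]
          refine Finset.sum_congr rfl fun j _ => ?_
          simp only [Polynomial.map_add, Polynomial.map_mul, Polynomial.map_X,
            Polynomial.map_C, _root_.map_mul]
          ring
  have claimRHS : C ν * p.map C = ∑ i ∈ Finset.range k, C (φ i) * ((C (vv i) * p).map C) := by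
    rw [hνdef, _root_.map_sum (C : Polynomial ℝ →+* Polynomial (Polynomial ℝ)), Finset.sum_mul]
    refine Finset.sum_congr rfl fun i _ => ?_
    simp only [Polynomial.map_mul, Polynomial.map_C, _root_.map_mul]
    ring
  have hrows : ∀ i, i < k → Rfun i = C (vv i) * p := by
    have hdiff : ∑ i ∈ Finset.range k, C (φ i) * ((Rfun i - C (vv i) * p).map C) = 0 := by
      have e : ∑ i ∈ Finset.range k, C (φ i) * ((Rfun i - C (vv i) * p).map C)
          = (X * q + q2) - C ν * p.map C := by
        rw [claim1, claimRHS, ← Finset.sum_sub_distrib]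
        refine Finset.sum_congr rfl fun i _ => ?_
        rw [Polynomial.map_sub, mul_sub]
      rw [e, ← id1, sub_self]
    intro i hi
    have := ext1 a b c φ ha hφ0 hφ1 hφrec k _ hdiff i hi
    exact sub_eq_zero.mp this
  have claim2 : C X * q + q2 = ∑ j ∈ Finset.range k, C (Sfun j) * (φ j).map C := by
    rw [hg, hg2, Finset.mul_sum, ← Finset.sum_add_distrib]
    refine Finset.sum_congr rfl fun j hj => ?_
    have hS : Sfun j = X * g j + g2 j := by
      rw [hAfun j (Finset.mem_range.mp hj), hBfun j (Finset.mem_range.mp hj)]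
      simp only [hSdef]
      rw [Finset.mul_sum, ← Finset.sum_add_distrib]
      refine Finset.sum_congr rfl fun i _ => ?_
      ring
    rw [hS, map_add, _root_.map_mul]
    ring
  have claim2RHS : C p * ν.map C = ∑ j ∈ Finset.range k, C (C (vv j) * p) * (φ j).map C := by
    rw [hνdef, mapC_sum, Finset.mul_sum]
    refine Finset.sum_congr rfl fun j _ => ?_
    simp only [Polynomial.map_mul, Polynomial.map_C, _root_.map_mul]
    ring
  have hcols : ∀ j, j < k → Sfun j = C (vv j) * p := by
    have hdiff : ∑ j ∈ Finset.range k, C (Sfun j - C (vv j) * p) * (φ j).map C = 0 := by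
      have e : ∑ j ∈ Finset.range k, C (Sfun j - C (vv j) * p) * (φ j).map C
          = (C X * q + q2) - C p * ν.map C := by
        rw [claim2, claim2RHS, ← Finset.sum_sub_distrib]
        refine Finset.sum_congr rfl fun j _ => ?_
        rw [map_sub, sub_mul]
      rw [e, ← id2, sub_self]
    intro j hj
    have := indepAux _ FD FU k _ hdiff j hj
    exact sub_eq_zero.mp this
  refine ⟨fun i j => Afun j i, fun i j => Bfun j i, fun i hi => ?_, fun j hj => ?_⟩
  · rw [← hrows i hi]
    simp only [hRdef]
    refine Finset.sum_congr rfl fun j _ => ?_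
    ring
  · rw [← hcols j hj]
    simp only [hSdef]
    refine Finset.sum_congr rfl fun i _ => ?_
    ring

end Exist

section MatrixGlue

variable (n k : ℕ) (a b c : ℕ → ℝ) (φ : ℕ → Polynomial ℝ)
  (Pm : ℕ → Matrix (Fin n) (Fin n) ℝ)

theorem finsum_to_range {M : Type*} [AddCommMonoid M] (K : ℕ) (F : Fin K → M) (f : ℕ → M)
    (hf : ∀ j : Fin K, F j = f j.val) : ∑ j : Fin K, F j = ∑ m ∈ Finset.range K, f m := by
  rw [Finset.sum_congr rfl (fun j _ => hf j)]
  exact Fin.sum_univ_eq_sum_range f K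

/-- Entry of `L * PhiMat`. -/
theorem mulPhi_entry (Xm Ym : Matrix (Fin k × Fin n) (Fin k × Fin n) ℝ)
    (i : Fin k) (r s : Fin n) :
    (pencilPoly Xm Ym * PhiMat n k φ) (i, r) s
      = ∑ m ∈ Finset.range k, (if h : m < k then
          (C (Xm (i,r) (⟨m, h⟩, s)) * X + C (Ym (i,r) (⟨m, h⟩, s))) * φ (k-1-m) else 0) := by
  rw [Matrix.mul_apply, Fintype.sum_prod_type]
  have inner : ∀ j : Fin k,
      (∑ t : Fin n, pencilPoly Xm Ym (i,r) (j,t) * PhiMat n k φ (j,t) s)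
        = (C (Xm (i,r) (j, s)) * X + C (Ym (i,r) (j, s))) * φ (k-1-j.val) := by
    intro j
    have e : ∀ t : Fin n, pencilPoly Xm Ym (i,r) (j,t) * PhiMat n k φ (j,t) s
        = if t = s then (C (Xm (i,r) (j,t)) * X + C (Ym (i,r) (j,t))) * φ (k-1-j.val) else 0 := by
      intro t
      simp only [PhiMat, pencilPoly, Matrix.of_apply]
      split_ifs <;> simp
    rw [Finset.sum_congr rfl (fun t _ => e t), Finset.sum_ite_eq' Finset.univ s
      (fun t => (C (Xm (i,r) (j,t)) * X + C (Ym (i,r) (j,t))) * φ (k-1-j.val))]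
    simp
  refine finsum_to_range k _ _ fun j => ?_
  rw [inner j, dif_pos j.isLt]

/-- Entry of `PhiMatᵀ * L`. -/
theorem phiMul_entry (Xm Ym : Matrix (Fin k × Fin n) (Fin k × Fin n) ℝ)
    (j : Fin k) (r s : Fin n) :
    ((PhiMat n k φ)ᵀ * pencilPoly Xm Ym) r (j, s)
      = ∑ m ∈ Finset.range k, (if h : m < k then
          (C (Xm (⟨m, h⟩, r) (j, s)) * X + C (Ym (⟨m, h⟩, r) (j, s))) * φ (k-1-m) else 0) := by
  rw [Matrix.mul_apply, Fintype.sum_prod_type]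
  have inner : ∀ i : Fin k,
      (∑ t : Fin n, (PhiMat n k φ)ᵀ r (i,t) * pencilPoly Xm Ym (i,t) (j,s))
        = (C (Xm (i, r) (j, s)) * X + C (Ym (i, r) (j, s))) * φ (k-1-i.val) := by
    intro i
    have e : ∀ t : Fin n, (PhiMat n k φ)ᵀ r (i,t) * pencilPoly Xm Ym (i,t) (j,s)
        = if t = r then (C (Xm (i,t) (j,s)) * X + C (Ym (i,t) (j,s))) * φ (k-1-i.val) else 0 := by
      intro t
      simp only [PhiMat, pencilPoly, Matrix.of_apply, Matrix.transpose_apply]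
      split_ifs with h1
      · ring
      · simp
    rw [Finset.sum_congr rfl (fun t _ => e t), Finset.sum_ite_eq' Finset.univ r
      (fun t => (C (Xm (i,t) (j,s)) * X + C (Ym (i,t) (j,s))) * φ (k-1-i.val))]
    simp
  refine finsum_to_range k _ _ fun i => ?_
  rw [inner i, dif_pos i.isLt]

/-- Reflected reindexing of the entry sum. -/
theorem reflect_entry (x y : ℕ → ℝ) :
    ∑ m ∈ Finset.range k, (if h : m < k then (C (x m) * X + C (y m)) * φ (k-1-m) else 0)
      = ∑ m ∈ Finset.range k, (C (x (k-1-m)) * X + C (y (k-1-m))) * φ m := by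
  rw [← Finset.sum_range_reflect (fun m => (C (x (k-1-m)) * X + C (y (k-1-m))) * φ m) k]
  refine Finset.sum_congr rfl fun m hm => ?_
  have hmk : m < k := Finset.mem_range.mp hm
  rw [dif_pos hmk]
  have e : k - 1 - (k - 1 - m) = m := by omega
  rw [e]

end MatrixGlue
section Char

variable (n k : ℕ) (a b c : ℕ → ℝ) (φ : ℕ → Polynomial ℝ)
  (Pm : ℕ → Matrix (Fin n) (Fin n) ℝ)
variable (ha : ∀ j, a j ≠ 0) (hφ0 : φ 0 = 1)
  (hφ1 : C (a 0) * φ 1 = (X - C (b 0)) * φ 0)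
  (hφrec : ∀ j, C (a (j + 1)) * φ (j + 2) =
      (X - C (b (j + 1))) * φ (j + 1) - C (c (j + 1)) * φ j)

include ha hφ0 hφ1 hφrec

omit ha hφ0 hφ1 hφrec in
theorem matP_expand (r s : Fin n) (z : ℝ) :
    C z * matP n k φ Pm r s = ∑ t ∈ Finset.range (k + 1), C (z * Pm t r s) * φ t := by
  simp only [matP, Matrix.of_apply, Finset.mul_sum]
  refine Finset.sum_congr rfl fun t _ => ?_
  rw [C_mul]
  ring

theorem ansatz1_char (hk : 1 ≤ k)
    (Xm Ym : Matrix (Fin k × Fin n) (Fin k × Fin n) ℝ) (v : Fin k → ℝ)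
    (h1 : Ansatz1 n k φ Pm (pencilPoly Xm Ym) v) (i : Fin k) (r s : Fin n) :
    ∀ t < k + 1,
      gcoef a b c (fun m => if h : m < k then Xm (i, r) (⟨k-1-m, by omega⟩, s) else 0)
        (fun m => if h : m < k then Ym (i, r) (⟨k-1-m, by omega⟩, s) else 0) t
        = v i * Pm t r s := by
  set u : ℕ → ℝ := fun m => if h : m < k then Xm (i, r) (⟨k-1-m, by omega⟩, s) else 0 with hu
  set w : ℕ → ℝ := fun m => if h : m < k then Ym (i, r) (⟨k-1-m, by omega⟩, s) else 0 with hw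
  have he := congr_fun (congr_fun h1 (i, r)) s
  have e1 : (pencilPoly Xm Ym * PhiMat n k φ) (i, r) s
      = ∑ m ∈ Finset.range k, (C (u m) * X + C (w m)) * φ m := by
    rw [mulPhi_entry n k φ Xm Ym i r s]
    rw [← Finset.sum_range_reflect (fun m => (C (u m) * X + C (w m)) * φ m) k]
    refine Finset.sum_congr rfl fun m hm => ?_
    have hmk : m < k := Finset.mem_range.mp hm
    rw [dif_pos hmk]
    have hfin : (⟨k-1-(k-1-m), by omega⟩ : Fin k) = (⟨m, hmk⟩ : Fin k) := Fin.mk_eq_mk.mpr (by omega)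
    simp only [hu, hw, dif_pos (show k-1-m < k by omega), hfin]
  have e2 : vKron n k v (matP n k φ Pm) (i, r) s
      = ∑ t ∈ Finset.range (k + 1), C (v i * Pm t r s) * φ t := by
    simp only [vKron, Matrix.of_apply]
    exact matP_expand n k φ Pm r s (v i)
  rw [e1, e2] at he
  exact rowchar k a b c φ ha hφ0 hφ1 hφrec u w
    (by intro m hm; simp [hu, dif_neg (show ¬ m < k by omega)])
    (by intro m hm; simp [hw, dif_neg (show ¬ m < k by omega)]) _ he

theorem ansatz2_char (hk : 1 ≤ k)
    (Xm Ym : Matrix (Fin k × Fin n) (Fin k × Fin n) ℝ) (w : Fin k → ℝ)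
    (h2 : Ansatz2 n k φ Pm (pencilPoly Xm Ym) w) (j : Fin k) (r s : Fin n) :
    ∀ t < k + 1,
      gcoef a b c (fun m => if h : m < k then Xm (⟨k-1-m, by omega⟩, r) (j, s) else 0)
        (fun m => if h : m < k then Ym (⟨k-1-m, by omega⟩, r) (j, s) else 0) t
        = w j * Pm t r s := by
  set u : ℕ → ℝ := fun m => if h : m < k then Xm (⟨k-1-m, by omega⟩, r) (j, s) else 0 with hu
  set w' : ℕ → ℝ := fun m => if h : m < k then Ym (⟨k-1-m, by omega⟩, r) (j, s) else 0 with hw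
  have he := congr_fun (congr_fun h2 r) (j, s)
  have e1 : ((PhiMat n k φ)ᵀ * pencilPoly Xm Ym) r (j, s)
      = ∑ m ∈ Finset.range k, (C (u m) * X + C (w' m)) * φ m := by
    rw [phiMul_entry n k φ Xm Ym j r s]
    rw [← Finset.sum_range_reflect (fun m => (C (u m) * X + C (w' m)) * φ m) k]
    refine Finset.sum_congr rfl fun m hm => ?_
    have hmk : m < k := Finset.mem_range.mp hm
    rw [dif_pos hmk]
    have hfin : (⟨k-1-(k-1-m), by omega⟩ : Fin k) = (⟨m, hmk⟩ : Fin k) := Fin.mk_eq_mk.mpr (by omega)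
    simp only [hu, hw, dif_pos (show k-1-m < k by omega), hfin]
  have e2 : vKronRow n k w (matP n k φ Pm) r (j, s)
      = ∑ t ∈ Finset.range (k + 1), C (w j * Pm t r s) * φ t := by
    simp only [vKronRow, Matrix.of_apply]
    exact matP_expand n k φ Pm r s (w j)
  rw [e1, e2] at he
  exact rowchar k a b c φ ha hφ0 hφ1 hφrec u w'
    (by intro m hm; simp [hu, dif_neg (show ¬ m < k by omega)])
    (by intro m hm; simp [hw, dif_neg (show ¬ m < k by omega)]) _ he

end Char
section KerExist

variable (n k : ℕ) (a b c : ℕ → ℝ) (φ : ℕ → Polynomial ℝ)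
  (Pm : ℕ → Matrix (Fin n) (Fin n) ℝ)
variable (ha : ∀ j, a j ≠ 0) (hφ0 : φ 0 = 1)
  (hφ1 : C (a 0) * φ 1 = (X - C (b 0)) * φ 0)
  (hφrec : ∀ j, C (a (j + 1)) * φ (j + 2) =
      (X - C (b (j + 1))) * φ (j + 1) - C (c (j + 1)) * φ j)

include ha hφ0 hφ1 hφrec

/-- extraction correctness -/
theorem corr (hk : 1 ≤ k)
    (Xm Ym : Matrix (Fin k × Fin n) (Fin k × Fin n) ℝ) (v : Fin k → ℝ)
    (h1 : Ansatz1 n k φ Pm (pencilPoly Xm Ym) v) (i : Fin k) (r s : Fin n) :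
    a (k-1) * Xm (i, r) (⟨0, by omega⟩, s) = v i * Pm k r s := by
  have h := ansatz1_char n k a b c φ Pm ha hφ0 hφ1 hφrec hk Xm Ym v h1 i r s k (by omega)
  unfold gcoef at h
  simp only [if_neg (show ¬ (k = 0) by omega), dif_neg (show ¬ (k < k) by omega),
    dif_neg (show ¬ (k + 1 < k) by omega), dif_pos (show k - 1 < k by omega),
    mul_zero, add_zero] at h
  have hfin : (⟨k-1-(k-1), by omega⟩ : Fin k) = (⟨0, by omega⟩ : Fin k) :=
    Fin.mk_eq_mk.mpr (by omega)
  rw [hfin] at h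
  linarith [h]

/-- kernel lemma -/
theorem kerzero (hk : 2 ≤ k)
    (Xm Ym : Matrix (Fin k × Fin n) (Fin k × Fin n) ℝ)
    (h1 : Ansatz1 n k φ Pm (pencilPoly Xm Ym) 0)
    (h2 : Ansatz2 n k φ Pm (pencilPoly Xm Ym) 0) :
    Xm = 0 ∧ Ym = 0 := by
  have hk1 : 1 ≤ k := by omega
  have key : ∀ (r s : Fin n), (∀ i j : Fin k, Xm (i, r) (j, s) = 0)
      ∧ (∀ i j : Fin k, Ym (i, r) (j, s) = 0) := by
    intro r s
    set Ar : ℕ → ℕ → ℝ := fun p q => if hp : p < k then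
      (if hq : q < k then Xm (⟨k-1-p, by omega⟩, r) (⟨k-1-q, by omega⟩, s) else 0) else 0 with hAr
    set Wr : ℕ → ℕ → ℝ := fun p q => if hp : p < k then
      (if hq : q < k then Ym (⟨k-1-p, by omega⟩, r) (⟨k-1-q, by omega⟩, s) else 0) else 0 with hWr
    have hrowEq : ∀ p (hp : p < k), ∀ t < k + 1, gcoef a b c (Ar p) (Wr p) t = 0 := by
      intro p hp t ht
      have h := ansatz1_char n k a b c φ Pm ha hφ0 hφ1 hφrec hk1 Xm Ym 0 h1
        ⟨k-1-p, by omega⟩ r s t ht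
      simp only [Pi.zero_apply, zero_mul] at h
      rw [← h]
      unfold gcoef
      simp only [hAr, hWr, dif_pos hp]
      try rfl
    have hcolEq : ∀ q (hq : q < k), ∀ t < k + 1,
        gcoef a b c (fun m => Ar m q) (fun m => Wr m q) t = 0 := by
      intro q hq t ht
      have h := ansatz2_char n k a b c φ Pm ha hφ0 hφ1 hφrec hk1 Xm Ym 0 h2
        ⟨k-1-q, by omega⟩ r s t ht
      simp only [Pi.zero_apply, zero_mul] at h
      rw [← h]
      unfold gcoef
      simp only [hAr, hWr, dif_pos hq]
      try rfl
    have hout : ∀ p q, k ≤ p ∨ k ≤ q → Ar p q = 0 := by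
      intro p q hpq
      rcases hpq with h | h
      · simp [hAr, dif_neg (show ¬ p < k by omega)]
      · by_cases hp : p < k
        · simp [hAr, dif_pos hp, dif_neg (show ¬ q < k by omega)]
        · simp [hAr, dif_neg hp]
    have hbrow : ∀ p, Ar p (k-1) = 0 := by
      intro p
      by_cases hp : p < k
      · have h := hrowEq p hp k (by omega)
        unfold gcoef at h
        rw [if_neg (show ¬ (k = 0) by omega)] at h
        have z1 : Ar p k = 0 := hout p k (Or.inr le_rfl)
        have z2 : Ar p (k+1) = 0 := hout p (k+1) (Or.inr (by omega))
        have z3 : Wr p k = 0 := by simp [hWr, dif_pos hp, dif_neg (show ¬ k < k by omega)]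
        simp only [z1, z2, z3] at h
        have hz : a (k-1) * Ar p (k-1) = 0 := by linarith [h]
        exact (mul_eq_zero.mp hz).resolve_left (ha (k-1))
      · exact hout p (k-1) (Or.inl (by omega))
    have hbcol : ∀ q, Ar (k-1) q = 0 := by
      intro q
      by_cases hq : q < k
      · have h := hcolEq q hq k (by omega)
        unfold gcoef at h
        rw [if_neg (show ¬ (k = 0) by omega)] at h
        have z1 : Ar k q = 0 := hout k q (Or.inl le_rfl)
        have z2 : Ar (k+1) q = 0 := hout (k+1) q (Or.inl (by omega))
        have z3 : Wr k q = 0 := by simp [hWr, dif_neg (show ¬ k < k by omega)]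
        simp only [z1, z2, z3] at h
        have hz : a (k-1) * Ar (k-1) q = 0 := by linarith [h]
        exact (mul_eq_zero.mp hz).resolve_left (ha (k-1))
      · exact hout (k-1) q (Or.inr (by omega))
    have hrel : ∀ p q, p < k → q < k →
        (if q = 0 then 0 else a (q-1) * Ar p (q-1)) + b q * Ar p q + c (q+1) * Ar p (q+1)
        = (if p = 0 then 0 else a (p-1) * Ar (p-1) q) + b p * Ar p q + c (p+1) * Ar (p+1) q := by
      intro p q hp hq
      have e1 := hrowEq p hp q (by omega)
      have e2 := hcolEq q hq p (by omega)
      unfold gcoef at e1 e2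
      linarith [e1, e2]
    have hAzero : ∀ p q, Ar p q = 0 := coreZero k a b c ha Ar hout hbrow hbcol hrel
    have hWzero : ∀ p q, p < k → q < k → Wr p q = 0 := by
      intro p q hp hq
      have h := hrowEq p hp q (by omega)
      unfold gcoef at h
      simp only [hAzero, mul_zero, ite_self, zero_add, add_zero] at h
      exact h
    constructor
    · intro i j
      have := hAzero (k-1-i.val) (k-1-j.val)
      simp only [hAr, dif_pos (show k-1-i.val < k by have := i.isLt; omega),
        dif_pos (show k-1-j.val < k by have := j.isLt; omega)] at this
      have hfi : (⟨k-1-(k-1-i.val), by omega⟩ : Fin k) = i := by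
        apply Fin.ext
        show k-1-(k-1-i.val) = i.val
        have := i.isLt
        omega
      have hfj : (⟨k-1-(k-1-j.val), by omega⟩ : Fin k) = j := by
        apply Fin.ext
        show k-1-(k-1-j.val) = j.val
        have := j.isLt
        omega
      rwa [hfi, hfj] at this
    · intro i j
      have := hWzero (k-1-i.val) (k-1-j.val) (by have := i.isLt; omega) (by have := j.isLt; omega)
      simp only [hWr, dif_pos (show k-1-i.val < k by have := i.isLt; omega),
        dif_pos (show k-1-j.val < k by have := j.isLt; omega)] at this
      have hfi : (⟨k-1-(k-1-i.val), by omega⟩ : Fin k) = i := by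
        apply Fin.ext
        show k-1-(k-1-i.val) = i.val
        have := i.isLt
        omega
      have hfj : (⟨k-1-(k-1-j.val), by omega⟩ : Fin k) = j := by
        apply Fin.ext
        show k-1-(k-1-j.val) = j.val
        have := j.isLt
        omega
      rwa [hfi, hfj] at this
  constructor
  · apply Matrix.ext
    rintro ⟨i, r⟩ ⟨j, s⟩
    rw [Matrix.zero_apply]
    exact (key r s).1 i j
  · apply Matrix.ext
    rintro ⟨i, r⟩ ⟨j, s⟩
    rw [Matrix.zero_apply]
    exact (key r s).2 i j

end KerExist
section Exist2

variable (n k : ℕ) (a b c : ℕ → ℝ) (φ : ℕ → Polynomial ℝ)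
  (Pm : ℕ → Matrix (Fin n) (Fin n) ℝ)
variable (ha : ∀ j, a j ≠ 0) (hφ0 : φ 0 = 1)
  (hφ1 : C (a 0) * φ 1 = (X - C (b 0)) * φ 0)
  (hφrec : ∀ j, C (a (j + 1)) * φ (j + 2) =
      (X - C (b (j + 1))) * φ (j + 1) - C (c (j + 1)) * φ j)

include ha hφ0 hφ1 hφrec

theorem matP_ne {r s : Fin n} (hP : Pm k r s ≠ 0) : matP n k φ Pm r s ≠ 0 := by
  intro h0
  refine hP (indepφ a b c φ ha hφ0 hφ1 hφrec (k+1) (fun t => Pm t r s) ?_ k (by omega))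
  simpa [matP] using h0

/-- if `L ∈ M1` with vector `0` and `L ∈ M2` with vector `w`, then `w = 0`. -/
theorem wzero (hk : 1 ≤ k) {r₀ s₀ : Fin n} (hP : Pm k r₀ s₀ ≠ 0)
    (L : Matrix (Fin k × Fin n) (Fin k × Fin n) (Polynomial ℝ))
    (h1 : Ansatz1 n k φ Pm L 0) (w : Fin k → ℝ) (h2 : Ansatz2 n k φ Pm L w) :
    w = 0 := by
  set ww : ℕ → ℝ := fun m => if h : m < k then w ⟨k-1-m, by omega⟩ else 0 with hww
  have hz : vKronRow n k w (matP n k φ Pm) * PhiMat n k φ = 0 := by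
    rw [← h2, Matrix.mul_assoc, h1]
    have hv0 : vKron n k (0 : Fin k → ℝ) (matP n k φ Pm) = 0 := by
      apply Matrix.ext
      intro p q
      simp [vKron]
    rw [hv0, Matrix.mul_zero]
  have he := congr_fun (congr_fun hz r₀) s₀
  have inner : ∀ j : Fin k,
      (∑ t : Fin n, vKronRow n k w (matP n k φ Pm) r₀ (j,t) * PhiMat n k φ (j,t) s₀)
        = C (w j) * φ (k-1-j.val) * matP n k φ Pm r₀ s₀ := by
    intro j
    have e : ∀ t : Fin n, vKronRow n k w (matP n k φ Pm) r₀ (j,t) * PhiMat n k φ (j,t) s₀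
        = if t = s₀ then C (w j) * φ (k-1-j.val) * matP n k φ Pm r₀ t else 0 := by
      intro t
      simp only [vKronRow, PhiMat, Matrix.of_apply]
      split_ifs with h1'
      · ring
      · simp
    rw [Finset.sum_congr rfl (fun t _ => e t), Finset.sum_ite_eq' Finset.univ s₀
      (fun t => C (w j) * φ (k-1-j.val) * matP n k φ Pm r₀ t)]
    simp
  have e1 : (vKronRow n k w (matP n k φ Pm) * PhiMat n k φ) r₀ s₀
      = ∑ j : Fin k, C (w j) * φ (k-1-j.val) * matP n k φ Pm r₀ s₀ := by
    rw [Matrix.mul_apply, Fintype.sum_prod_type]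
    exact Finset.sum_congr rfl (fun j _ => inner j)
  have e2 : ∑ j : Fin k, C (w j) * φ (k-1-j.val) * matP n k φ Pm r₀ s₀
      = (∑ m ∈ Finset.range k, C (ww m) * φ m) * matP n k φ Pm r₀ s₀ := by
    rw [Finset.sum_mul,
      ← Finset.sum_range_reflect (fun m => C (ww m) * φ m * matP n k φ Pm r₀ s₀) k]
    refine finsum_to_range k _ _ fun j => ?_
    have hj := j.isLt
    have hwj : ww (k-1-j.val) = w j := by
      rw [hww]
      simp only [dif_pos (show k-1-j.val < k by omega)]
      congr 1
      apply Fin.ext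
      show k-1-(k-1-j.val) = j.val
      omega
    rw [hwj]
  rw [e1, e2, Matrix.zero_apply] at he
  have hzero : ∑ m ∈ Finset.range k, C (ww m) * φ m = 0 :=
    (mul_eq_zero.mp he).resolve_right (matP_ne n k a b c φ Pm ha hφ0 hφ1 hφrec hP)
  have hcoef := indepφ a b c φ ha hφ0 hφ1 hφrec k ww hzero
  funext j
  have hj := j.isLt
  have : ww (k-1-j.val) = w j := by
    rw [hww]
    simp only [dif_pos (show k-1-j.val < k by omega)]
    congr 1
    apply Fin.ext
    show k-1-(k-1-j.val) = j.val
    omega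
  rw [Pi.zero_apply, ← this]
  exact hcoef (k-1-j.val) (by omega)

/-- existence of a DM pencil for each ansatz vector. -/
theorem existDM (hk : 1 ≤ k) (v : Fin k → ℝ) :
    ∃ Xm Ym : Matrix (Fin k × Fin n) (Fin k × Fin n) ℝ,
      Ansatz1 n k φ Pm (pencilPoly Xm Ym) v ∧ Ansatz2 n k φ Pm (pencilPoly Xm Ym) v := by
  classical
  set vv : ℕ → ℝ := fun m => if h : m < k then v ⟨k-1-m, by omega⟩ else 0 with hvv
  have hdegP : ∀ r s : Fin n, (matP n k φ Pm r s).degree ≤ (k : ℕ) := by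
    intro r s
    rw [show matP n k φ Pm r s = ∑ t ∈ Finset.range (k+1), C (Pm t r s) * φ t from rfl]
    refine le_trans (degree_sum_le _ _) (Finset.sup_le fun m hm => ?_)
    calc (C (Pm m r s) * φ m).degree ≤ (C (Pm m r s)).degree + (φ m).degree := degree_mul_le _ _
      _ ≤ 0 + (φ m).degree := by gcongr; exact degree_C_le
      _ = (m : ℕ) := by rw [zero_add, degφ a b c φ ha hφ0 hφ1 hφrec m]
      _ ≤ ((k:ℕ) : WithBot ℕ) := by
          exact_mod_cast Nat.lt_succ_iff.mp (Finset.mem_range.mp hm)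
  have spec : ∀ r s : Fin n, ∃ AB : (ℕ → ℕ → ℝ) × (ℕ → ℕ → ℝ),
      (∀ i < k, ∑ j ∈ Finset.range k, (C (AB.1 i j) * X + C (AB.2 i j)) * φ j
        = C (vv i) * matP n k φ Pm r s) ∧
      (∀ j < k, ∑ i ∈ Finset.range k, (C (AB.1 i j) * X + C (AB.2 i j)) * φ i
        = C (vv j) * matP n k φ Pm r s) := by
    intro r s
    obtain ⟨A, B, hA, hB⟩ := scalarExist k a b c φ ha hφ0 hφ1 hφrec hk vv
      (matP n k φ Pm r s) (hdegP r s)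
    exact ⟨(A, B), hA, hB⟩
  choose AB hrows hcols using spec
  refine ⟨fun p q => (AB p.2 q.2).1 (k-1-p.1.val) (k-1-q.1.val),
          fun p q => (AB p.2 q.2).2 (k-1-p.1.val) (k-1-q.1.val), ?_, ?_⟩
  · apply Matrix.ext
    rintro ⟨i, r⟩ s
    have hi := i.isLt
    have e0 := mulPhi_entry n k φ
      (fun p q => (AB p.2 q.2).1 (k-1-p.1.val) (k-1-q.1.val))
      (fun p q => (AB p.2 q.2).2 (k-1-p.1.val) (k-1-q.1.val)) i r s
    dsimp only at e0
    rw [e0, reflect_entry k φ (fun m => (AB r s).1 (k-1-i.val) (k-1-m))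
        (fun m => (AB r s).2 (k-1-i.val) (k-1-m))]
    have e2 : ∀ m ∈ Finset.range k,
        (C ((AB r s).1 (k-1-i.val) (k-1-(k-1-m))) * X
          + C ((AB r s).2 (k-1-i.val) (k-1-(k-1-m)))) * φ m
        = (C ((AB r s).1 (k-1-i.val) m) * X + C ((AB r s).2 (k-1-i.val) m)) * φ m := by
      intro m hm
      have : k-1-(k-1-m) = m := by have := Finset.mem_range.mp hm; omega
      rw [this]
    rw [Finset.sum_congr rfl e2, hrows r s (k-1-i.val) (by omega)]
    have hvi : vv (k-1-i.val) = v i := by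
      rw [hvv]
      simp only [dif_pos (show k-1-i.val < k by omega)]
      congr 1
      apply Fin.ext
      show k-1-(k-1-i.val) = i.val
      omega
    rw [hvi]
    rfl
  · apply Matrix.ext
    rintro r ⟨j, s⟩
    have hj := j.isLt
    have e0 := phiMul_entry n k φ
      (fun p q => (AB p.2 q.2).1 (k-1-p.1.val) (k-1-q.1.val))
      (fun p q => (AB p.2 q.2).2 (k-1-p.1.val) (k-1-q.1.val)) j r s
    dsimp only at e0
    rw [e0, reflect_entry k φ (fun m => (AB r s).1 (k-1-m) (k-1-j.val))
        (fun m => (AB r s).2 (k-1-m) (k-1-j.val))]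
    have e2 : ∀ m ∈ Finset.range k,
        (C ((AB r s).1 (k-1-(k-1-m)) (k-1-j.val)) * X
          + C ((AB r s).2 (k-1-(k-1-m)) (k-1-j.val))) * φ m
        = (C ((AB r s).1 m (k-1-j.val)) * X + C ((AB r s).2 m (k-1-j.val))) * φ m := by
      intro m hm
      have : k-1-(k-1-m) = m := by have := Finset.mem_range.mp hm; omega
      rw [this]
    rw [Finset.sum_congr rfl e2, hcols r s (k-1-j.val) (by omega)]
    have hvj : vv (k-1-j.val) = v j := by
      rw [hvv]
      simp only [dif_pos (show k-1-j.val < k by omega)]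
      congr 1
      apply Fin.ext
      show k-1-(k-1-j.val) = j.val
      omega
    rw [hvj]
    rfl

end Exist2

theorem statement_16
    (n k : ℕ) (hn : 0 < n) (hk : 2 ≤ k)
    (a b c : ℕ → ℝ) (ha : ∀ j, a j ≠ 0)
    (φ : ℕ → Polynomial ℝ) (hφ0 : φ 0 = 1)
    (hφ1 : C (a 0) * φ 1 = (X - C (b 0)) * φ 0)
    (hφrec : ∀ j, C (a (j + 1)) * φ (j + 2) =
      (X - C (b (j + 1))) * φ (j + 1) - C (c (j + 1)) * φ j)
    (Pm : ℕ → Matrix (Fin n) (Fin n) ℝ) (hPk : Pm k ≠ 0)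
    :
    ∃ S : Submodule ℝ (Matrix (Fin k × Fin n) (Fin k × Fin n) ℝ × Matrix (Fin k × Fin n) (Fin k × Fin n) ℝ),
      (S : Set (Matrix (Fin k × Fin n) (Fin k × Fin n) ℝ × Matrix (Fin k × Fin n) (Fin k × Fin n) ℝ)) =
        {L | (∃ v : Fin k → ℝ, Ansatz1 n k φ Pm (pencilPoly L.1 L.2) v) ∧
              (∃ w : Fin k → ℝ, Ansatz2 n k φ Pm (pencilPoly L.1 L.2) w)} ∧
      Module.finrank ℝ S = k := by
  classical
  have hk1 : 1 ≤ k := by omega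
  obtain ⟨r₀, s₀, hP0⟩ : ∃ r s, Pm k r s ≠ 0 := by
    by_contra hcon
    push_neg at hcon
    refine hPk ?_
    ext r s
    exact hcon r s
  -- algebraic structure of the constructions
  have ppadd : ∀ (L L' : Matrix (Fin k × Fin n) (Fin k × Fin n) ℝ ×
      Matrix (Fin k × Fin n) (Fin k × Fin n) ℝ),
      pencilPoly (L.1 + L'.1) (L.2 + L'.2) = pencilPoly L.1 L.2 + pencilPoly L'.1 L'.2 := by
    intro L L'
    apply Matrix.ext
    intro p q
    simp only [pencilPoly, Matrix.of_apply, Matrix.add_apply, C_add]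
    ring
  have ppsmul : ∀ (t : ℝ) (L : Matrix (Fin k × Fin n) (Fin k × Fin n) ℝ ×
      Matrix (Fin k × Fin n) (Fin k × Fin n) ℝ),
      pencilPoly (t • L.1) (t • L.2) = C t • pencilPoly L.1 L.2 := by
    intro t L
    apply Matrix.ext
    intro p q
    simp only [pencilPoly, Matrix.of_apply, Matrix.smul_apply, smul_eq_mul, C_mul]
    ring
  have ppzero : pencilPoly (0 : Matrix (Fin k × Fin n) (Fin k × Fin n) ℝ) 0 = 0 := by
    apply Matrix.ext
    intro p q
    simp [pencilPoly]
  have vkadd : ∀ (v v' : Fin k → ℝ) Q, vKron n k (v + v') Q = vKron n k v Q + vKron n k v' Q := by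
    intro v v' Q
    apply Matrix.ext
    intro p q
    simp only [vKron, Matrix.of_apply, Matrix.add_apply, Pi.add_apply, C_add]
    ring
  have vksmul : ∀ (t : ℝ) (v : Fin k → ℝ) Q, vKron n k (t • v) Q = C t • vKron n k v Q := by
    intro t v Q
    apply Matrix.ext
    intro p q
    simp only [vKron, Matrix.of_apply, Matrix.smul_apply, Pi.smul_apply, smul_eq_mul, C_mul]
    ring
  have vkzero : ∀ Q, vKron n k (0 : Fin k → ℝ) Q = 0 := by
    intro Q
    apply Matrix.ext
    intro p q
    simp [vKron]
  have vradd : ∀ (v v' : Fin k → ℝ) Q,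
      vKronRow n k (v + v') Q = vKronRow n k v Q + vKronRow n k v' Q := by
    intro v v' Q
    apply Matrix.ext
    intro p q
    simp only [vKronRow, Matrix.of_apply, Matrix.add_apply, Pi.add_apply, C_add]
    ring
  have vrsmul : ∀ (t : ℝ) (v : Fin k → ℝ) Q, vKronRow n k (t • v) Q = C t • vKronRow n k v Q := by
    intro t v Q
    apply Matrix.ext
    intro p q
    simp only [vKronRow, Matrix.of_apply, Matrix.smul_apply, Pi.smul_apply, smul_eq_mul, C_mul]
    ring
  have vrzero : ∀ Q, vKronRow n k (0 : Fin k → ℝ) Q = 0 := by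
    intro Q
    apply Matrix.ext
    intro p q
    simp [vKronRow]
  set S : Submodule ℝ (Matrix (Fin k × Fin n) (Fin k × Fin n) ℝ ×
      Matrix (Fin k × Fin n) (Fin k × Fin n) ℝ) :=
    { carrier := {L | (∃ v : Fin k → ℝ, Ansatz1 n k φ Pm (pencilPoly L.1 L.2) v) ∧
        (∃ w : Fin k → ℝ, Ansatz2 n k φ Pm (pencilPoly L.1 L.2) w)}
      add_mem' := by
        rintro L L' ⟨⟨v, hv⟩, ⟨w, hw⟩⟩ ⟨⟨v', hv'⟩, ⟨w', hw'⟩⟩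
        constructor
        · refine ⟨v + v', ?_⟩
          show pencilPoly (L + L').1 (L + L').2 * PhiMat n k φ = _
          rw [Prod.fst_add, Prod.snd_add, ppadd, Matrix.add_mul, hv, hv', ← vkadd]
        · refine ⟨w + w', ?_⟩
          show (PhiMat n k φ)ᵀ * pencilPoly (L + L').1 (L + L').2 = _
          rw [Prod.fst_add, Prod.snd_add, ppadd, Matrix.mul_add, hw, hw', ← vradd]
      zero_mem' := by
        constructor
        · refine ⟨0, ?_⟩
          show pencilPoly (0 : Matrix (Fin k × Fin n) (Fin k × Fin n) ℝ) 0 * PhiMat n k φ = _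
          rw [ppzero, Matrix.zero_mul, vkzero]
        · refine ⟨0, ?_⟩
          show (PhiMat n k φ)ᵀ * pencilPoly (0 : Matrix (Fin k × Fin n) (Fin k × Fin n) ℝ) 0 = _
          rw [ppzero, Matrix.mul_zero, vrzero]
      smul_mem' := by
        rintro t L ⟨⟨v, hv⟩, ⟨w, hw⟩⟩
        constructor
        · refine ⟨t • v, ?_⟩
          show pencilPoly (t • L).1 (t • L).2 * PhiMat n k φ = _
          rw [Prod.smul_fst, Prod.smul_snd, ppsmul, Matrix.smul_mul, hv, vksmul]
        · refine ⟨t • w, ?_⟩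
          show (PhiMat n k φ)ᵀ * pencilPoly (t • L).1 (t • L).2 = _
          rw [Prod.smul_fst, Prod.smul_snd, ppsmul, Matrix.mul_smul, hw, vrsmul] } with hS
  refine ⟨S, rfl, ?_⟩
  -- the coordinate extraction map
  set F : (Matrix (Fin k × Fin n) (Fin k × Fin n) ℝ ×
      Matrix (Fin k × Fin n) (Fin k × Fin n) ℝ) →ₗ[ℝ] (Fin k → ℝ) :=
    { toFun := fun L i => (Pm k r₀ s₀)⁻¹ * (a (k-1) * L.1 (i, r₀) (⟨0, by omega⟩, s₀))
      map_add' := by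
        intro L L'
        funext i
        simp only [Prod.fst_add, Matrix.add_apply, Pi.add_apply]
        ring
      map_smul' := by
        intro t L
        funext i
        simp only [Prod.smul_fst, Matrix.smul_apply, smul_eq_mul, RingHom.id_apply,
          Pi.smul_apply]
        ring } with hF
  have hFval : ∀ (L : Matrix (Fin k × Fin n) (Fin k × Fin n) ℝ ×
      Matrix (Fin k × Fin n) (Fin k × Fin n) ℝ) (v : Fin k → ℝ),
      Ansatz1 n k φ Pm (pencilPoly L.1 L.2) v → F L = v := by
    intro L v hv
    funext i
    have hc := corr n k a b c φ Pm ha hφ0 hφ1 hφrec hk1 L.1 L.2 v hv i r₀ s₀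
    show (Pm k r₀ s₀)⁻¹ * (a (k-1) * L.1 (i, r₀) (⟨0, by omega⟩, s₀)) = v i
    rw [hc]
    field_simp
  set f : S →ₗ[ℝ] (Fin k → ℝ) := F.comp S.subtype with hf
  have hker : ∀ x : S, f x = 0 → x = 0 := by
    rintro ⟨L, hL⟩ hfx
    obtain ⟨⟨v, hv⟩, ⟨w, hw⟩⟩ := hL
    have hFL : F L = v := hFval L v hv
    have hv0 : v = 0 := by rw [← hFL]; exact hfx
    rw [hv0] at hv
    have hw0 : w = 0 :=
      wzero n k a b c φ Pm ha hφ0 hφ1 hφrec hk1 hP0 (pencilPoly L.1 L.2) hv w hw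
    rw [hw0] at hw
    obtain ⟨hX0, hY0⟩ := kerzero n k a b c φ Pm ha hφ0 hφ1 hφrec hk L.1 L.2 hv hw
    apply Subtype.ext
    show L = 0
    exact Prod.ext hX0 hY0
  have hinj : Function.Injective f := by
    rw [← LinearMap.ker_eq_bot]
    exact LinearMap.ker_eq_bot'.mpr hker
  have hsurj : Function.Surjective f := by
    intro v
    obtain ⟨Xm, Ym, hA1, hA2⟩ := existDM n k a b c φ Pm ha hφ0 hφ1 hφrec hk1 v
    have hmem : (Xm, Ym) ∈ S := ⟨⟨v, hA1⟩, ⟨v, hA2⟩⟩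
    exact ⟨⟨(Xm, Ym), hmem⟩, hFval (Xm, Ym) v hA1⟩
  have e := LinearEquiv.ofBijective f ⟨hinj, hsurj⟩
  rw [e.finrank_eq]
  exact Module.finrank_fin_fun ℝ
end
end

section
/- Left eigenvector recovery: let P(λ) be a regular n×n matrix polynomial of degree k ≥ 2 and let ℒ(λ) ∈ 𝕄₁(P) with ansatz vector v ∈ ℝ^k be a strong linearization of P(λ). Then for every finite eigenvalue α ∈ ℂ of P (det P(α) = 0), every left eigenvector w ∈ ℂ^n of P at α (w ≠ 0, w^T P(α) = 0) satisfies w^T = u^T(v ⊗ I_n) for some left eigenvector u ∈ ℂ^{kn} of ℒ at α (u ≠ 0, u^T ℒ(α) = 0). -/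
open Polynomial Matrix

noncomputable section

section AuxLemmas

variable {k : ℕ} {a b c : ℕ → ℝ} {φ : ℕ → Polynomial ℝ}

lemma c_cancel {x : ℝ} (hx : x ≠ 0) (p q : Polynomial ℝ) (h : C x * p = q) :
    p = C x⁻¹ * q := by
  rw [← h, ← mul_assoc, ← C_mul, inv_mul_cancel₀ hx, C_1, one_mul]

lemma phi_deg (ha : ∀ j, a j ≠ 0) (hφ0 : φ 0 = 1)
    (hφ1 : C (a 0) * φ 1 = (X - C (b 0)) * φ 0)
    (hφrec : ∀ j, C (a (j + 1)) * φ (j + 2) =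
      (X - C (b (j + 1))) * φ (j + 1) - C (c (j + 1)) * φ j) :
    ∀ j, (φ j).natDegree ≤ j ∧ (φ j).coeff j ≠ 0 := by
  have h1 : φ 1 = C (a 0)⁻¹ * (X - C (b 0)) := by
    have := c_cancel (ha 0) _ _ hφ1
    rwa [hφ0, mul_one] at this
  have key : ∀ j, ((φ j).natDegree ≤ j ∧ (φ j).coeff j ≠ 0) ∧
      ((φ (j+1)).natDegree ≤ j+1 ∧ (φ (j+1)).coeff (j+1) ≠ 0) := by
    intro j
    induction j with
    | zero =>
      refine ⟨⟨?_, ?_⟩, ?_, ?_⟩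
      · simp [hφ0]
      · simp [hφ0]
      · rw [h1]
        exact (natDegree_C_mul_le _ _).trans (natDegree_X_sub_C_le _)
      · rw [h1, coeff_C_mul]
        simp [coeff_X, coeff_C, ha 0]
    | succ j ih =>
      obtain ⟨⟨hd0, hc0⟩, hd1, hc1⟩ := ih
      refine ⟨⟨hd1, hc1⟩, ?_, ?_⟩
      · have hrepr : φ (j + 2) = C (a (j+1))⁻¹ *
            ((X - C (b (j + 1))) * φ (j + 1) - C (c (j + 1)) * φ j) :=
          c_cancel (ha (j+1)) _ _ (hφrec j)
        rw [hrepr]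
        have e1 : ((X - C (b (j + 1))) * φ (j + 1)).natDegree ≤ j + 2 := by
          refine natDegree_mul_le.trans ?_
          have := natDegree_X_sub_C_le (b (j+1))
          omega
        have e2 : (C (c (j + 1)) * φ j).natDegree ≤ j + 2 :=
          (natDegree_C_mul_le _ _).trans (by omega)
        exact (natDegree_C_mul_le _ _).trans ((natDegree_sub_le _ _).trans (max_le e1 e2))
      · have hrepr : φ (j + 2) = C (a (j+1))⁻¹ *
            ((X - C (b (j + 1))) * φ (j + 1) - C (c (j + 1)) * φ j) :=
          c_cancel (ha (j+1)) _ _ (hφrec j)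
        have hx : (X * φ (j+1)).coeff (j + 2) = (φ (j+1)).coeff (j+1) :=
          coeff_X_mul (φ (j+1)) (j+1)
        have hcoeff : ((X - C (b (j + 1))) * φ (j + 1) - C (c (j + 1)) * φ j).coeff (j + 2)
            = (φ (j+1)).coeff (j+1) := by
          have z1 : (φ (j+1)).coeff (j+2) = 0 :=
            coeff_eq_zero_of_natDegree_lt (lt_of_le_of_lt hd1 (by omega))
          have z2 : (φ j).coeff (j+2) = 0 :=
            coeff_eq_zero_of_natDegree_lt (lt_of_le_of_lt hd0 (by omega))
          rw [coeff_sub, sub_mul, coeff_sub, hx, coeff_C_mul, coeff_C_mul, z1, z2]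
          ring
        rw [hrepr, coeff_C_mul, hcoeff]
        exact mul_ne_zero (inv_ne_zero (ha (j+1))) hc1
  exact fun j => (key j).1

lemma lin_indep_range (hdeg : ∀ j, (φ j).natDegree ≤ j ∧ (φ j).coeff j ≠ 0) :
    ∀ (m : ℕ) (y : ℕ → ℝ), (∑ j ∈ Finset.range m, C (y j) * φ j) = 0 → ∀ j < m, y j = 0 := by
  intro m
  induction m with
  | zero => simp
  | succ m ih =>
    intro y h
    have htop : y m = 0 := by
      have h1 := congrArg (fun p => Polynomial.coeff p m) h
      simp only [finset_sum_coeff, coeff_C_mul, coeff_zero] at h1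
      rw [Finset.sum_range_succ, Finset.sum_eq_zero (fun j hj => by
        rw [coeff_eq_zero_of_natDegree_lt
          (lt_of_le_of_lt (hdeg j).1 (Finset.mem_range.mp hj)), mul_zero]), zero_add] at h1
      exact (mul_eq_zero.mp h1).resolve_right (hdeg m).2
    rw [Finset.sum_range_succ, htop, map_zero, zero_mul, add_zero] at h
    intro j hj
    rcases Nat.lt_succ_iff_lt_or_eq.mp hj with h' | rfl
    · exact ih y h j h'
    · exact htop

lemma lin_indep_fin (hk : 1 ≤ k) (hdeg : ∀ j, (φ j).natDegree ≤ j ∧ (φ j).coeff j ≠ 0)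
    (y : Fin k → ℝ) (h : ∑ q : Fin k, C (y q) * φ (k - 1 - q.val) = 0) : ∀ q, y q = 0 := by
  set y' : ℕ → ℝ := fun j => if h : j < k then y ⟨j, h⟩ else 0 with hy'
  have h1 : ∑ j ∈ Finset.range k, C (y' j) * φ (k - 1 - j) = 0 := by
    rw [← Fin.sum_univ_eq_sum_range (fun j => C (y' j) * φ (k - 1 - j)) k, ← h]
    refine Finset.sum_congr rfl fun q _ => ?_
    simp [hy', q.isLt]
  have h2 : ∑ j ∈ Finset.range k, C (y' (k - 1 - j)) * φ j = 0 := by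
    rw [← Finset.sum_range_reflect (fun j => C (y' (k - 1 - j)) * φ j) k]
    refine Eq.trans (Finset.sum_congr rfl fun j hj => ?_) h1
    have hj' := Finset.mem_range.mp hj
    have e : k - 1 - (k - 1 - j) = j := by omega
    rw [e]
  intro q
  have := lin_indep_range hdeg k _ h2 (k - 1 - q.val) (by omega)
  have hq : k - 1 - (k - 1 - q.val) = q.val := by omega
  rw [hq] at this
  rw [show y q = y' q.val by simp [hy', q.isLt]]
  exact this

lemma pencil_coeff {p : Polynomial ℝ} (h : p.degree ≤ 1) {m : ℕ} (hm : 2 ≤ m) :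
    p.coeff m = 0 := by
  refine coeff_eq_zero_of_degree_lt (lt_of_le_of_lt h ?_)
  exact_mod_cast (show (1:ℕ) < m by omega)

lemma poly_linear (p : Polynomial ℝ) (h2 : ∀ m, 2 ≤ m → p.coeff m = 0) :
    p = C (p.coeff 0) + C (p.coeff 1) * X := by
  apply Polynomial.ext; intro m
  rcases m with _ | _ | m
  · simp
  · simp [coeff_C]
  · rw [h2 (m+2) (by omega), coeff_add, coeff_C]
    simp [coeff_X]

lemma mulPhi_apply {n k : ℕ} (φ : ℕ → Polynomial ℝ)
    (M : Matrix (Fin k × Fin n) (Fin k × Fin n) (Polynomial ℝ)) (p : Fin k × Fin n) (s : Fin n) :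
    (M * PhiMat n k φ) p s = ∑ q1 : Fin k, M p (q1, s) * φ (k - 1 - q1.val) := by
  rw [Matrix.mul_apply, Fintype.sum_prod_type]
  refine Finset.sum_congr rfl fun q1 _ => ?_
  have h : ∀ q2 : Fin n, M p (q1, q2) * PhiMat n k φ (q1, q2) s
      = if q2 = s then M p (q1, s) * φ (k - 1 - q1.val) else 0 := by
    intro q2
    by_cases hq : q2 = s
    · subst hq; simp [PhiMat]
    · simp [PhiMat, hq]
  simp_rw [h]
  rw [Finset.sum_ite_eq' Finset.univ s (fun _ => M p (q1, s) * φ (k - 1 - q1.val)),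
    if_pos (Finset.mem_univ _)]

lemma anchor {n k : ℕ} (hk : 2 ≤ k) (ha : ∀ j, a j ≠ 0)
    (hφ1 : C (a 0) * φ 1 = (X - C (b 0)) * φ 0)
    (hφrec : ∀ j, C (a (j + 1)) * φ (j + 2) =
      (X - C (b (j + 1))) * φ (j + 1) - C (c (j + 1)) * φ j)
    (Pm : ℕ → Matrix (Fin n) (Fin n) ℝ) :
    FPhi n k a b c Pm * PhiMat n k φ =
      Matrix.of fun p s => if p.1.val = 0 then matP n k φ Pm p.2 s else 0 := by
  refine Matrix.ext fun p s => ?_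
  rw [mulPhi_apply]
  obtain ⟨⟨p1, hp1⟩, p2⟩ := p
  simp only [Matrix.of_apply]
  by_cases hp0 : p1 = 0
  · subst hp0
    rw [if_pos rfl]
    obtain ⟨m, rfl⟩ : ∃ m, k = m + 2 := ⟨k - 2, by omega⟩
    set f : ℕ → Polynomial ℝ := fun j =>
      (if j = 0 then
          C ((a (m+1))⁻¹) * (X - C (b (m+1))) * C (Pm (m+2) p2 s) + C (Pm (m+1) p2 s)
        else if j = 1 then
          C (Pm m p2 s) - C (c (m+1) / a (m+1)) * C (Pm (m+2) p2 s)
        else C (Pm (m + 1 - j) p2 s)) * φ (m + 1 - j) with hf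
    have hsum1 : ∑ q1 : Fin (m+2), FPhi n (m+2) a b c Pm (⟨0, hp1⟩, p2) (q1, s)
        * φ (m + 2 - 1 - q1.val) = ∑ j ∈ Finset.range (m+2), f j := by
      rw [← Fin.sum_univ_eq_sum_range f (m+2)]
      refine Finset.sum_congr rfl fun q1 _ => ?_
      rw [hf]
      simp only [FPhi, Matrix.of_apply]
      norm_num
    rw [hsum1, Finset.sum_range_succ' f (m+1), Finset.sum_range_succ' (fun j => f (j+1)) m]
    have hsum3 : ∑ j ∈ Finset.range m, f (j + 1 + 1) =
        ∑ i ∈ Finset.range m, C (Pm i p2 s) * φ i := by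
      rw [← Finset.sum_range_reflect (fun i => C (Pm i p2 s) * φ i) m]
      refine Finset.sum_congr rfl fun j hj => ?_
      have hj' := Finset.mem_range.mp hj
      rw [hf]
      simp only [Nat.succ_ne_zero, if_false, Nat.succ.injEq, Nat.add_eq_zero, and_false]
      have e : m + 1 - (j + 1 + 1) = m - 1 - j := by omega
      rw [e]
    rw [hsum3]
    have hmatP : matP n (m+2) φ Pm p2 s = ∑ i ∈ Finset.range (m+3), C (Pm i p2 s) * φ i := rfl
    rw [hmatP, Finset.sum_range_succ, Finset.sum_range_succ, Finset.sum_range_succ]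
    have hf0 : f 0 = (C ((a (m+1))⁻¹) * (X - C (b (m+1))) * C (Pm (m+2) p2 s)
        + C (Pm (m+1) p2 s)) * φ (m+1) := by rw [hf]; norm_num
    have hf1 : f (0+1) = (C (Pm m p2 s) - C (c (m+1) / a (m+1)) * C (Pm (m+2) p2 s)) * φ m := by
      rw [hf]; norm_num
    rw [hf0, hf1]
    have hrepr : φ (m + 2) = C ((a (m+1))⁻¹) *
        ((X - C (b (m + 1))) * φ (m + 1) - C (c (m + 1)) * φ m) :=
      c_cancel (ha (m+1)) _ _ (hφrec m)
    rw [div_eq_mul_inv, C_mul, hrepr]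
    ring
  · rw [if_neg hp0]
    have hentry : ∀ q1 : Fin k, FPhi n k a b c Pm (⟨p1, hp1⟩, p2) (q1, s)
        = (if q1.val + 1 = p1 then -C (a (k-1-p1)) else if q1.val = p1 then X - C (b (k-1-p1))
            else if q1.val = p1 + 1 then -C (c (k-1-p1)) else 0)
          * (if p2 = s then 1 else 0) := by
      intro q1
      simp only [FPhi, Matrix.of_apply, if_neg hp0]
    simp_rw [hentry]
    by_cases hps : p2 = s
    · simp only [if_pos hps, mul_one]
      have hsplit : ∀ q1 : Fin k,
          (if q1.val + 1 = p1 then -C (a (k-1-p1)) else if q1.val = p1 then X - C (b (k-1-p1))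
            else if q1.val = p1 + 1 then -C (c (k-1-p1)) else 0) * φ (k-1-q1.val)
          = (if q1.val + 1 = p1 then -C (a (k-1-p1)) * φ (k-1-q1.val) else 0)
            + ((if q1.val = p1 then (X - C (b (k-1-p1))) * φ (k-1-q1.val) else 0)
            + (if q1.val = p1 + 1 then -C (c (k-1-p1)) * φ (k-1-q1.val) else 0)) := by
        intro q1
        split_ifs <;> first | omega | ring
      rw [Finset.sum_congr rfl (fun q1 _ => hsplit q1), Finset.sum_add_distrib,
        Finset.sum_add_distrib]
      have e1 : (∑ q1 : Fin k, if q1.val + 1 = p1 then -C (a (k-1-p1)) * φ (k-1-q1.val) else 0)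
          = -C (a (k-1-p1)) * φ (k - p1) := by
        refine (Finset.sum_eq_single_of_mem (⟨p1 - 1, by omega⟩ : Fin k)
          (Finset.mem_univ _) fun b _ hb =>
            if_neg fun hc => hb (Fin.ext (show b.val = p1 - 1 by omega))).trans ?_
        have hv : (⟨p1 - 1, by omega⟩ : Fin k).val = p1 - 1 := rfl
        rw [hv, if_pos (show p1 - 1 + 1 = p1 by omega)]
        have e : k - 1 - (p1 - 1) = k - p1 := by omega
        rw [e]
      have e2 : (∑ q1 : Fin k, if q1.val = p1 then (X - C (b (k-1-p1))) * φ (k-1-q1.val) else 0)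
          = (X - C (b (k-1-p1))) * φ (k - 1 - p1) := by
        refine (Finset.sum_eq_single_of_mem (⟨p1, hp1⟩ : Fin k)
          (Finset.mem_univ _) fun b _ hb => if_neg fun hc => hb (Fin.ext hc)).trans ?_
        have hv : (⟨p1, hp1⟩ : Fin k).val = p1 := rfl
        rw [hv, if_pos rfl]
      rw [e1, e2]
      by_cases hpk : p1 + 1 < k
      · have e3 : (∑ q1 : Fin k, if q1.val = p1 + 1 then -C (c (k-1-p1)) * φ (k-1-q1.val) else 0)
            = -C (c (k-1-p1)) * φ (k - 2 - p1) := by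
          refine (Finset.sum_eq_single_of_mem (⟨p1 + 1, hpk⟩ : Fin k)
            (Finset.mem_univ _) fun b _ hb => if_neg fun hc => hb (Fin.ext hc)).trans ?_
          have hv : (⟨p1 + 1, hpk⟩ : Fin k).val = p1 + 1 := rfl
          rw [hv, if_pos rfl]
          have e : k - 1 - (p1 + 1) = k - 2 - p1 := by omega
          rw [e]
        rw [e3]
        have i1 : k - 1 - p1 = (k - 2 - p1) + 1 := by omega
        have i2 : k - p1 = (k - 2 - p1) + 2 := by omega
        rw [i1, i2]
        linear_combination (-1 : Polynomial ℝ) * hφrec (k - 2 - p1)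
      · have e3 : (∑ q1 : Fin k, if q1.val = p1 + 1 then -C (c (k-1-p1)) * φ (k-1-q1.val) else 0)
            = 0 := Finset.sum_eq_zero fun q1 _ => if_neg (by have := q1.isLt; omega)
        rw [e3]
        have i1 : k - 1 - p1 = 0 := by omega
        have i2 : k - p1 = 1 := by omega
        rw [i1, i2]
        linear_combination (-1 : Polynomial ℝ) * hφ1
    · refine Finset.sum_eq_zero fun q1 _ => ?_
      rw [if_neg hps, mul_zero, zero_mul]

lemma FPhi_coeff_ge2 {n k : ℕ} (Pm : ℕ → Matrix (Fin n) (Fin n) ℝ)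
    (p q : Fin k × Fin n) {m : ℕ} (hm : 2 ≤ m) :
    (FPhi n k a b c Pm p q).coeff m = 0 := by
  have h0 : m ≠ 0 := by omega
  have h1 : m ≠ 1 := by omega
  have h0' : (0:ℕ) ≠ m := by omega
  have h1' : (1:ℕ) ≠ m := by omega
  simp only [FPhi, Matrix.of_apply]
  split_ifs <;>
    simp [coeff_add, coeff_sub, coeff_C_mul, coeff_mul_C, coeff_X, coeff_C, h0, h1, h0', h1',
      mul_ite, mul_one, mul_zero, apply_ite (fun r => Polynomial.coeff r m)]

lemma FPhi_coeff_one {n k : ℕ} (Pm : ℕ → Matrix (Fin n) (Fin n) ℝ)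
    (p q : Fin k × Fin n) (hq : q.1.val ≠ 0) :
    (FPhi n k a b c Pm p q).coeff 1 = if p = q then 1 else 0 := by
  obtain ⟨p1, p2⟩ := p
  obtain ⟨q1, q2⟩ := q
  simp only at hq
  simp only [FPhi, Matrix.of_apply]
  by_cases hp : p1.val = 0
  · rw [if_pos hp, if_neg hq, if_neg (show ¬((p1, p2) = (q1, q2)) by
      intro h; injection h with e1 e2; exact hq (e1 ▸ hp))]
    by_cases h1 : q1.val = 1
    · rw [if_pos h1]
      simp [coeff_sub, coeff_C, coeff_C_mul]
    · rw [if_neg h1]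
      simp [coeff_C]
  · rw [if_neg hp]
    by_cases hc1 : q1.val + 1 = p1.val
    · rw [if_pos hc1, if_neg (show ¬((p1, p2) = (q1, q2)) by
        intro h; injection h with e1 e2; rw [e1] at hc1; omega)]
      simp [mul_ite, mul_one, mul_zero, apply_ite (fun r => Polynomial.coeff r 1),
        coeff_neg, coeff_C]
    · rw [if_neg hc1]
      by_cases hc2 : q1.val = p1.val
      · rw [if_pos hc2]
        by_cases hval : p2 = q2
        · rw [if_pos hval, if_pos (show (p1, p2) = (q1, q2) from by
            rw [show p1 = q1 from Fin.ext hc2.symm, hval])]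
          simp [coeff_sub, coeff_X, coeff_C]
        · rw [if_neg hval, if_neg (show ¬((p1, p2) = (q1, q2)) by
            intro h; injection h with e1 e2; exact hval e2)]
          simp
      · rw [if_neg hc2, if_neg (show ¬((p1, p2) = (q1, q2)) by
          intro h; injection h with e1 e2; rw [e1] at hc2; exact hc2 rfl)]
        by_cases hc3 : q1.val = p1.val + 1
        · rw [if_pos hc3]
          simp [mul_ite, mul_one, mul_zero, apply_ite (fun r => Polynomial.coeff r 1),
            coeff_neg, coeff_C]
        · rw [if_neg hc3]
          simp

lemma struct {n k : ℕ} (hk : 2 ≤ k) (ha : ∀ j, a j ≠ 0) (hφ0 : φ 0 = 1)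
    (hφ1 : C (a 0) * φ 1 = (X - C (b 0)) * φ 0)
    (hφrec : ∀ j, C (a (j + 1)) * φ (j + 2) =
      (X - C (b (j + 1))) * φ (j + 1) - C (c (j + 1)) * φ j)
    (Pm : ℕ → Matrix (Fin n) (Fin n) ℝ)
    (L : Matrix (Fin k × Fin n) (Fin k × Fin n) (Polynomial ℝ))
    (hL : IsPencil L) (v : Fin k → ℝ) (hv : Ansatz1 n k φ Pm L v) :
    ∃ B, L = liftC (extCols n k v B) * FPhi n k a b c Pm := by
  have hdeg := phi_deg ha hφ0 hφ1 hφrec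
  set B : Matrix (Fin k × Fin n) (Fin (k-1) × Fin n) ℝ :=
    Matrix.of (fun p i => (L p (⟨i.1.val + 1, by have := i.1.isLt; omega⟩, i.2)).coeff 1) with hB
  refine ⟨B, ?_⟩
  set E := extCols n k v B with hE
  set G := liftC E * FPhi n k a b c Pm with hG
  have hGapp : ∀ p q, G p q = ∑ q' : Fin k × Fin n, C (E p q') * FPhi n k a b c Pm q' q := by
    intro p q
    rw [hG, Matrix.mul_apply]
    exact Finset.sum_congr rfl fun q' _ => rfl
  have hG2 : ∀ p q m, 2 ≤ m → (G p q).coeff m = 0 := by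
    intro p q m hm
    rw [hGapp, finset_sum_coeff]
    refine Finset.sum_eq_zero fun q' _ => ?_
    rw [coeff_C_mul, FPhi_coeff_ge2 Pm q' q hm, mul_zero]
  have hG1 : ∀ p q, q.1.val ≠ 0 → (G p q).coeff 1 = (L p q).coeff 1 := by
    intro p q hq
    rw [hGapp, finset_sum_coeff]
    have h : ∀ q' : Fin k × Fin n, (C (E p q') * FPhi n k a b c Pm q' q).coeff 1
        = if q' = q then E p q' else 0 := by
      intro q'
      rw [coeff_C_mul, FPhi_coeff_one Pm q' q hq]
      split_ifs <;> simp
    simp_rw [h]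
    rw [Finset.sum_ite_eq' Finset.univ q (fun q' => E p q'), if_pos (Finset.mem_univ _)]
    rw [hE]
    show extCols n k v B p q = _
    simp only [extCols, Matrix.of_apply]
    rw [dif_neg hq]
    rw [hB]
    simp only [Matrix.of_apply]
    have hx : ∀ (r : Fin k × Fin n), r = q → (L p r).coeff 1 = (L p q).coeff 1 :=
      fun r hr => by rw [hr]
    apply hx
    refine Prod.ext_iff.mpr ⟨Fin.ext ?_, rfl⟩
    show q.1.val - 1 + 1 = q.1.val
    omega
  have hGPhi : G * PhiMat n k φ = vKron n k v (matP n k φ Pm) := by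
    rw [hG, Matrix.mul_assoc, anchor hk ha hφ1 hφrec Pm]
    refine Matrix.ext fun p s => ?_
    rw [Matrix.mul_apply, Fintype.sum_prod_type]
    have hin : ∀ q1' : Fin k, (∑ q2' : Fin n, liftC E p (q1', q2') *
        (Matrix.of fun p s => if p.1.val = 0 then matP n k φ Pm p.2 s else 0) (q1', q2') s)
        = if q1'.val = 0 then ∑ q2' : Fin n, C (E p (q1', q2')) * matP n k φ Pm q2' s else 0 := by
      intro q1'
      by_cases hx : q1'.val = 0
      · rw [if_pos hx]
        refine Finset.sum_congr rfl fun q2' _ => ?_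
        rw [Matrix.of_apply, if_pos hx]
        rfl
      · rw [if_neg hx]
        refine Finset.sum_eq_zero fun q2' _ => ?_
        rw [Matrix.of_apply, if_neg hx, mul_zero]
    simp_rw [hin]
    rw [Finset.sum_eq_single_of_mem (⟨0, by omega⟩ : Fin k) (Finset.mem_univ _)
      (fun b _ hb => if_neg fun hc => hb (Fin.ext hc))]
    rw [if_pos rfl]
    have hE0 : ∀ q2' : Fin n, E p (⟨0, by omega⟩, q2') = if p.2 = q2' then v p.1 else 0 := by
      intro q2'
      rw [hE]
      show extCols n k v B p (⟨0, by omega⟩, q2') = _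
      simp only [extCols, Matrix.of_apply]
      rw [dif_pos (by trivial)]
    simp_rw [hE0, apply_ite C, map_zero, ite_mul, zero_mul]
    rw [Finset.sum_ite_eq Finset.univ p.2 (fun q2' => C (v p.1) * matP n k φ Pm q2' s),
      if_pos (Finset.mem_univ _)]
    rfl
  have main : ∀ (p : Fin k × Fin n) (s : Fin n) (q1 : Fin k), L p (q1, s) = G p (q1, s) := by
    intro p s
    have hsum : ∑ q1 : Fin k, (L p (q1, s) - G p (q1, s)) * φ (k - 1 - q1.val) = 0 := by
      have h1 : (L * PhiMat n k φ) p s = (G * PhiMat n k φ) p s := by rw [hv, hGPhi]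
      rw [mulPhi_apply, mulPhi_apply] at h1
      have h2 := sub_eq_zero.mpr h1
      rw [← Finset.sum_sub_distrib] at h2
      simp only [sub_mul]
      exact h2
    have hd2 : ∀ (q1 : Fin k) (m : ℕ), 2 ≤ m → (L p (q1, s) - G p (q1, s)).coeff m = 0 := by
      intro q1 m hm
      rw [coeff_sub, pencil_coeff (hL p (q1, s)) hm, hG2 p (q1, s) m hm, sub_zero]
    have hd1' : ∀ q1 : Fin k, q1.val ≠ 0 → (L p (q1, s) - G p (q1, s)).coeff 1 = 0 := by
      intro q1 h
      rw [coeff_sub, hG1 p (q1, s) h, sub_self]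
    have hd1 : ∀ q1 : Fin k, (L p (q1, s) - G p (q1, s)).coeff 1 = 0 := by
      intro q1
      by_cases h : q1.val = 0
      · replace h : q1 = ⟨0, by omega⟩ := Fin.ext h
        rw [h]
        have hc := congrArg (fun pl => Polynomial.coeff pl k) hsum
        simp only [finset_sum_coeff, coeff_zero] at hc
        rw [Finset.sum_eq_single_of_mem (⟨0, by omega⟩ : Fin k) (Finset.mem_univ _)
          (fun bb _ hbb => by
            have hbv : bb.val ≠ 0 := fun hcon => hbb (Fin.ext hcon)
            rw [poly_linear (L p (bb, s) - G p (bb, s)) (hd2 bb), hd1' bb hbv, map_zero,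
              zero_mul, add_zero, coeff_C_mul, coeff_eq_zero_of_natDegree_lt
                (lt_of_le_of_lt (hdeg (k - 1 - bb.val)).1 (by omega)), mul_zero])] at hc
        rw [poly_linear (L p (⟨0, by omega⟩, s) - G p (⟨0, by omega⟩, s)) (hd2 _)] at hc
        have hXφ : ∀ dd : Polynomial ℝ, ((C (dd.coeff 0)
            + C (dd.coeff 1) * X) * φ (k - 1 - (0:ℕ))).coeff k
            = dd.coeff 1 * (φ (k - 1)).coeff (k - 1) := by
          intro dd
          have e0 : k - 1 - (0:ℕ) = k - 1 := by omega
          rw [e0, add_mul, coeff_add, coeff_C_mul,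
            coeff_eq_zero_of_natDegree_lt (lt_of_le_of_lt (hdeg (k-1)).1 (by omega)),
            mul_zero, zero_add, mul_assoc, coeff_C_mul]
          congr 1
          rw [show k = (k - 1) + 1 by omega]
          exact coeff_X_mul (φ (k - 1)) (k - 1)
        rw [hXφ] at hc
        exact (mul_eq_zero.mp hc).resolve_right (hdeg (k-1)).2
      · exact hd1' q1 h
    have hdC : ∀ q1 : Fin k, L p (q1, s) - G p (q1, s)
        = C ((L p (q1, s) - G p (q1, s)).coeff 0) := by
      intro q1
      have hpl := poly_linear (L p (q1, s) - G p (q1, s)) (hd2 q1)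
      rwa [hd1 q1, map_zero, zero_mul, add_zero] at hpl
    have hy0 : ∀ q1 : Fin k, (L p (q1, s) - G p (q1, s)).coeff 0 = 0 := by
      apply lin_indep_fin (by omega) hdeg (fun q1 => (L p (q1, s) - G p (q1, s)).coeff 0)
      calc ∑ q1 : Fin k, C ((L p (q1, s) - G p (q1, s)).coeff 0) * φ (k - 1 - q1.val)
          = ∑ q1 : Fin k, (L p (q1, s) - G p (q1, s)) * φ (k - 1 - q1.val) :=
            Finset.sum_congr rfl fun q1 _ => by rw [← hdC q1]
        _ = 0 := hsum
    intro q1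
    have hz2 : L p (q1, s) - G p (q1, s) = 0 := by rw [hdC q1, hy0 q1, map_zero]
    exact sub_eq_zero.mp hz2
  refine Matrix.ext fun p q => ?_
  exact main p q.2 q.1

lemma finvmk {m : ℕ} (i : ℕ) (h : i < m) : ((⟨i, h⟩ : Fin m) : ℕ) = i := rfl

lemma detdiag {n k : ℕ} (hk : 2 ≤ k) (Pp : Matrix (Fin n) (Fin n) (Polynomial ℝ)) :
    (diagPI n k Pp).det = Pp.det := by
  have hk0 : 0 < k := by omega
  let ee : (Fin k × Fin n) ≃ (Fin n ⊕ (Fin (k-1) × Fin n)) :=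
  { toFun := fun p => if h : p.1.val = 0 then Sum.inl p.2
      else Sum.inr (⟨p.1.val - 1, by have := p.1.isLt; omega⟩, p.2)
    invFun := Sum.elim (fun s => (⟨0, hk0⟩, s))
      (fun is => (⟨is.1.val + 1, by have := is.1.isLt; omega⟩, is.2))
    left_inv := by
      rintro ⟨p1, p2⟩
      by_cases h : p1.val = 0
      · simp only [dif_pos h, Sum.elim_inl, Prod.mk.injEq]
        exact ⟨Fin.ext h.symm, trivial⟩
      · simp only [dif_neg h, Sum.elim_inr, Prod.mk.injEq]
        refine ⟨Fin.ext ?_, trivial⟩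
        show p1.val - 1 + 1 = p1.val
        omega
    right_inv := by
      rintro (s | ⟨i, t⟩) <;> rfl }
  rw [← Matrix.det_reindex_self ee (diagPI n k Pp)]
  have heq : Matrix.reindex ee ee (diagPI n k Pp) =
      Matrix.fromBlocks Pp 0 0
        (1 : Matrix (Fin (k-1) × Fin n) (Fin (k-1) × Fin n) (Polynomial ℝ)) := by
    refine Matrix.ext fun i j => ?_
    rcases i with s | ⟨i1, i2⟩ <;> rcases j with t | ⟨j1, j2⟩
    · show diagPI n k Pp (⟨0, hk0⟩, s) (⟨0, hk0⟩, t) = Pp s t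
      simp [diagPI, finvmk]
    · show diagPI n k Pp (⟨0, hk0⟩, s) (⟨j1.val + 1, by have := j1.isLt; omega⟩, j2) = 0
      simp only [diagPI, Matrix.of_apply]
      rw [if_neg (fun hc => Nat.succ_ne_zero j1.val hc.2),
        if_neg (fun hc => by
          injection hc with e1 e2
          exact Nat.succ_ne_zero j1.val ((congrArg Fin.val e1).symm : j1.val + 1 = 0))]
    · show diagPI n k Pp (⟨i1.val + 1, by have := i1.isLt; omega⟩, i2) (⟨0, hk0⟩, t) = 0
      simp only [diagPI, Matrix.of_apply]
      rw [if_neg (fun hc => Nat.succ_ne_zero i1.val hc.1),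
        if_neg (fun hc => by
          injection hc with e1 e2
          exact Nat.succ_ne_zero i1.val (congrArg Fin.val e1 : i1.val + 1 = 0))]
    · show diagPI n k Pp (⟨i1.val + 1, by have := i1.isLt; omega⟩, i2)
          (⟨j1.val + 1, by have := j1.isLt; omega⟩, j2)
        = (1 : Matrix (Fin (k-1) × Fin n) (Fin (k-1) × Fin n) (Polynomial ℝ)) (i1, i2) (j1, j2)
      rw [Matrix.one_apply]
      simp only [diagPI, Matrix.of_apply]
      rw [if_neg (fun hc => Nat.succ_ne_zero i1.val hc.1)]
      by_cases h : (i1, i2) = (j1, j2)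
      · rw [if_pos h]
        injection h with e1 e2
        rw [if_pos (by rw [e1, e2])]
      · rw [if_neg h]
        rw [if_neg (fun hc => by
          injection hc with e1 e2
          have e1' : i1.val + 1 = j1.val + 1 := congrArg Fin.val e1
          exact h (by rw [show i1 = j1 from Fin.ext (by omega), e2]))]
  rw [heq, Matrix.det_fromBlocks_zero₂₁, Matrix.det_one, mul_one]

lemma evalC_mul {m1 m2 m3 : Type*} [Fintype m2] (α : ℂ)
    (M : Matrix m1 m2 (Polynomial ℝ)) (N : Matrix m2 m3 (Polynomial ℝ)) :
    evalC α (M * N) = evalC α M * evalC α N := by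
  refine Matrix.ext fun p q => ?_
  simp [evalC, Matrix.mul_apply, map_sum]

lemma evalC_det {m1 : Type*} [Fintype m1] [DecidableEq m1] (α : ℂ)
    (M : Matrix m1 m1 (Polynomial ℝ)) :
    (evalC α M).det = aeval α M.det := by
  have h := RingHom.map_det (Polynomial.aeval α).toRingHom M
  have h2 : (Polynomial.aeval α).toRingHom.mapMatrix M = evalC α M := rfl
  rw [h2] at h
  exact h.symm

lemma Fnull {n k : ℕ} (hk : 2 ≤ k) (ha : ∀ j, a j ≠ 0) (α : ℂ)
    (Pm : ℕ → Matrix (Fin n) (Fin n) ℝ) (y : Fin k × Fin n → ℂ)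
    (h0 : ∀ s, y (⟨0, by omega⟩, s) = 0)
    (hy : Matrix.vecMul y (evalC α (FPhi n k a b c Pm)) = 0) : y = 0 := by
  have key : ∀ t, ∀ (ht : t < k), ∀ s, y (⟨t, ht⟩, s) = 0 := by
    intro t
    induction t using Nat.strong_induction_on with
    | _ t IH =>
      rcases t with _ | t'
      · intro ht s; exact h0 s
      · intro ht s
        have hcol : ∑ p : Fin k × Fin n,
            y p * evalC α (FPhi n k a b c Pm) p (⟨t', by omega⟩, s) = 0 := by
          have := congrFun hy (⟨t', by omega⟩, s)
          simpa [Matrix.vecMul, dotProduct] using this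
        rw [Fintype.sum_prod_type] at hcol
        rw [Finset.sum_eq_single_of_mem (⟨t' + 1, ht⟩ : Fin k) (Finset.mem_univ _)
          (fun p1 _ hne => ?_)] at hcol
        · -- the surviving block
          have hFval : ∀ p2 : Fin n, evalC α (FPhi n k a b c Pm) (⟨t' + 1, ht⟩, p2)
              (⟨t', by omega⟩, s)
              = if p2 = s then -(algebraMap ℝ ℂ (a (k - 1 - (t' + 1)))) else 0 := by
            intro p2
            have hb0 : ¬((⟨t' + 1, ht⟩ : Fin k).val = 0) := Nat.succ_ne_zero t'
            simp only [evalC, Matrix.of_apply, FPhi]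
            rw [if_neg hb0, if_pos (trivial : True)]
            rw [show ((-C (a (k - 1 - (t' + 1)))) * (if p2 = s then (1:Polynomial ℝ) else 0))
              = (if p2 = s then -C (a (k - 1 - (t' + 1))) else 0) by split_ifs <;> simp]
            split_ifs <;> simp [aeval_C]
          simp_rw [hFval, mul_ite, mul_zero] at hcol
          rw [Finset.sum_ite_eq' Finset.univ s
            (fun p2 => y (⟨t' + 1, ht⟩, p2) * -(algebraMap ℝ ℂ (a (k - 1 - (t' + 1))))),
            if_pos (Finset.mem_univ _)] at hcol
          have hane : (algebraMap ℝ ℂ (a (k - 1 - (t' + 1)))) ≠ 0 := by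
            simp only [Complex.coe_algebraMap, ne_eq, Complex.ofReal_eq_zero]
            exact ha _
          have := mul_eq_zero.mp hcol
          rcases this with h | h
          · exact h
          · exact absurd h (by simpa using hane)
        · -- other blocks vanish
          refine Finset.sum_eq_zero fun p2 _ => ?_
          by_cases hle : p1.val ≤ t'
          · have hyz : y (p1, p2) = 0 := by
              have := IH p1.val (by omega) p1.isLt p2
              simpa using this
            rw [hyz, zero_mul]
          · have hge : t' + 2 ≤ p1.val := by
              rcases Nat.lt_or_ge p1.val (t' + 2) with h | h
              · exact absurd (Fin.ext (show p1.val = t' + 1 by omega)) hne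
              · exact h
            have hzero : evalC α (FPhi n k a b c Pm) (p1, p2) (⟨t', by omega⟩, s) = 0 := by
              have hb0 : ¬(p1.val = 0) := by omega
              have hb1 : ¬((⟨t', by omega⟩ : Fin k).val + 1 = p1.val) := by
                simp only [finvmk]
                omega
              have hb2 : ¬((⟨t', by omega⟩ : Fin k).val = p1.val) := by
                simp only [finvmk]
                omega
              have hb3 : ¬((⟨t', by omega⟩ : Fin k).val = p1.val + 1) := by
                simp only [finvmk]
                omega
              simp only [evalC, Matrix.of_apply, FPhi]
              rw [if_neg hb0, if_neg hb1, if_neg hb2, if_neg hb3, zero_mul, map_zero]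
            rw [hzero, mul_zero]
  funext p
  obtain ⟨⟨t, ht⟩, s⟩ := p
  exact key t ht s

end AuxLemmas

theorem statement_18
    (n k : ℕ) (hn : 0 < n) (hk : 2 ≤ k)
    (a b c : ℕ → ℝ) (ha : ∀ j, a j ≠ 0)
    (φ : ℕ → Polynomial ℝ) (hφ0 : φ 0 = 1)
    (hφ1 : C (a 0) * φ 1 = (X - C (b 0)) * φ 0)
    (hφrec : ∀ j, C (a (j + 1)) * φ (j + 2) =
      (X - C (b (j + 1))) * φ (j + 1) - C (c (j + 1)) * φ j)
    (Pm : ℕ → Matrix (Fin n) (Fin n) ℝ) (hPk : Pm k ≠ 0)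
    (hreg : (matP n k φ Pm).det ≠ 0)
    (L : Matrix (Fin k × Fin n) (Fin k × Fin n) (Polynomial ℝ)) (hL : IsPencil L) (v : Fin k → ℝ) (hv : Ansatz1 n k φ Pm L v)
    (hstrong : IsStrongLin n k L (matP n k φ Pm)) :
    ∀ α : ℂ, (evalC α (matP n k φ Pm)).det = 0 →
      ∀ w : Fin n → ℂ, w ≠ 0 → Matrix.vecMul w (evalC α (matP n k φ Pm)) = 0 →
        ∃ u : Fin k × Fin n → ℂ, u ≠ 0 ∧ Matrix.vecMul u (evalC α L) = 0 ∧
          Matrix.vecMul u (vKronC n k v) = w := by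
  intro α _hdet0 w hw0 hwP
  classical
  obtain ⟨B, hLEF⟩ := struct hk ha hφ0 hφ1 hφrec Pm L hL v hv
  set E := extCols n k v B with hE
  obtain ⟨U, V, ⟨cu, hcu, hdU⟩, ⟨cv, hcv, hdV⟩, hULV⟩ := hstrong.1
  have hdetdiag : (diagPI n k (matP n k φ Pm)).det = (matP n k φ Pm).det := detdiag hk _
  have hdetL : L.det ≠ 0 := by
    intro h0
    have hd := congrArg Matrix.det hULV
    rw [Matrix.det_mul, Matrix.det_mul, h0, mul_zero, zero_mul, hdetdiag] at hd
    exact hreg hd.symm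
  have hdetE : E.det ≠ 0 := by
    intro h0
    apply hdetL
    rw [hLEF, Matrix.det_mul]
    have hlc : (liftC E).det = C E.det := by
      have h := RingHom.map_det (C : ℝ →+* Polynomial ℝ) E
      have h2 : (C : ℝ →+* Polynomial ℝ).mapMatrix E = liftC E := rfl
      rw [h2] at h
      exact h.symm
    rw [hlc, h0, map_zero, zero_mul]
  -- complex matrices
  set P0 := evalC α (matP n k φ Pm) with hP0
  set Ac := evalC α L with hAcdef
  set Fc := evalC α (FPhi n k a b c Pm) with hFc
  set Vc := vKronC n k v with hVc
  set Uc := evalC α U with hUc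
  set Wc := evalC α V with hWc
  set Ec : Matrix (Fin k × Fin n) (Fin k × Fin n) ℂ := E.map (algebraMap ℝ ℂ) with hEc
  have hdetUc : Uc.det ≠ 0 := by
    rw [hUc, evalC_det, hdU, aeval_C]
    simp only [Complex.coe_algebraMap, ne_eq, Complex.ofReal_eq_zero]
    exact hcu
  have hdetWc : Wc.det ≠ 0 := by
    rw [hWc, evalC_det, hdV, aeval_C]
    simp only [Complex.coe_algebraMap, ne_eq, Complex.ofReal_eq_zero]
    exact hcv
  have hdetEc : Ec.det ≠ 0 := by
    have h := RingHom.map_det (algebraMap ℝ ℂ) E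
    have h2 : (algebraMap ℝ ℂ).mapMatrix E = Ec := rfl
    rw [h2] at h
    rw [← h]
    simp only [Complex.coe_algebraMap, ne_eq, Complex.ofReal_eq_zero]
    exact hdetE
  have hAc : Ac = Ec * Fc := by
    rw [hAcdef, hLEF, evalC_mul]
    congr 1
    refine Matrix.ext fun p q => ?_
    simp [evalC, liftC, Matrix.map_apply, aeval_C, hEc]
  have hUAV : Uc * Ac * Wc = evalC α (diagPI n k (matP n k φ Pm)) := by
    rw [hUc, hAcdef, hWc, ← evalC_mul, ← evalC_mul, hULV]
  have hcancel : ∀ {M : Matrix (Fin k × Fin n) (Fin k × Fin n) ℂ}, M.det ≠ 0 →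
      ∀ {u : Fin k × Fin n → ℂ}, Matrix.vecMul u M = 0 → u = 0 := by
    intro M hM u hu
    have h2 : Matrix.vecMul (Matrix.vecMul u M) M⁻¹ = 0 := by
      rw [hu, Matrix.zero_vecMul]
    rwa [Matrix.vecMul_vecMul, Matrix.mul_nonsing_inv _ (isUnit_iff_ne_zero.mpr hM),
      Matrix.vecMul_one] at h2
  -- the embedding map (w' : Fin n → ℂ) ↦ (w', 0, ..., 0)
  set Zm : Matrix (Fin n) (Fin k × Fin n) ℂ :=
    Matrix.of (fun s p => if p.1.val = 0 ∧ s = p.2 then 1 else 0) with hZm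
  have hzApp : ∀ (w' : Fin n → ℂ) (p : Fin k × Fin n),
      Matrix.vecMul w' Zm p = if p.1.val = 0 then w' p.2 else 0 := by
    intro w' p
    simp only [Matrix.vecMul, dotProduct, hZm, Matrix.of_apply]
    by_cases h : p.1.val = 0
    · rw [if_pos h]
      have h2 : ∀ s : Fin n, (w' s * if p.1.val = 0 ∧ s = p.2 then 1 else 0)
          = if s = p.2 then w' s else 0 := by
        intro s
        by_cases hs : s = p.2 <;> simp [h, hs]
      simp_rw [h2]
      rw [Finset.sum_ite_eq' Finset.univ p.2 w', if_pos (Finset.mem_univ _)]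
    · rw [if_neg h]
      refine Finset.sum_eq_zero fun s _ => by simp [h]
  have hdiagC : ∀ p q : Fin k × Fin n, evalC α (diagPI n k (matP n k φ Pm)) p q
      = if p.1.val = 0 ∧ q.1.val = 0 then P0 p.2 q.2 else if p = q then 1 else 0 := by
    intro p q
    simp only [evalC, diagPI, Matrix.of_apply, hP0]
    split_ifs <;> simp
  have hw'diag : ∀ w' : Fin n → ℂ, Matrix.vecMul w' P0 = 0 →
      Matrix.vecMul (Matrix.vecMul w' Zm) (evalC α (diagPI n k (matP n k φ Pm))) = 0 := by
    intro w' hw'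
    have hdiag0 : ∀ (p2 : Fin n) (qq : Fin k × Fin n),
        evalC α (diagPI n k (matP n k φ Pm)) (⟨0, by omega⟩, p2) qq
        = if qq.1.val = 0 then P0 p2 qq.2
          else if ((⟨0, by omega⟩ : Fin k), p2) = qq then 1 else 0 := by
      intro p2 qq
      rw [hdiagC]
      by_cases h : qq.1.val = 0
      · simp [h]
      · simp [h]
    have hz0app : ∀ p2 : Fin n, (Matrix.vecMul w' Zm) (⟨0, by omega⟩, p2) = w' p2 :=
      fun p2 => (hzApp w' _).trans (if_pos rfl)
    funext q
    have hsum : Matrix.vecMul (Matrix.vecMul w' Zm) (evalC α (diagPI n k (matP n k φ Pm))) q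
        = ∑ p : Fin k × Fin n, (Matrix.vecMul w' Zm) p
            * evalC α (diagPI n k (matP n k φ Pm)) p q := rfl
    rw [Pi.zero_apply, hsum, Fintype.sum_prod_type]
    rw [Finset.sum_eq_single_of_mem (⟨0, by omega⟩ : Fin k) (Finset.mem_univ _)
      (fun bb _ hb => Finset.sum_eq_zero fun p2 _ => by
        rw [hzApp, if_neg (fun hc => hb (Fin.ext hc)), zero_mul])]
    simp_rw [hz0app, hdiag0]
    by_cases hq : q.1.val = 0
    · simp_rw [if_pos hq]
      have h3 := congrFun hw' q.2
      simpa [Matrix.vecMul, dotProduct] using h3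
    · simp_rw [if_neg hq]
      refine Finset.sum_eq_zero fun p2 _ => ?_
      rw [if_neg (fun hc => hq (by rw [← hc])), mul_zero]
  have hS2 : ∀ w' : Fin n → ℂ, Matrix.vecMul w' P0 = 0 →
      Matrix.vecMul (Matrix.vecMul (Matrix.vecMul w' Zm) Uc) Ac = 0 := by
    intro w' hw'
    have h1 : Matrix.vecMul (Matrix.vecMul w' Zm) (Uc * Ac * Wc) = 0 := by
      rw [hUAV]
      exact hw'diag w' hw'
    rw [← Matrix.vecMul_vecMul, ← Matrix.vecMul_vecMul] at h1
    exact hcancel hdetWc h1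
  have hinjective : ∀ u : Fin k × Fin n → ℂ,
      Matrix.vecMul u Ac = 0 → Matrix.vecMul u Vc = 0 → u = 0 := by
    intro u hua huv
    have hyF : Matrix.vecMul (Matrix.vecMul u Ec) Fc = 0 := by
      rw [Matrix.vecMul_vecMul, ← hAc, hua]
    have hy0 : ∀ s, (Matrix.vecMul u Ec) (⟨0, by omega⟩, s) = 0 := by
      intro s
      have hcolE : ∀ p : Fin k × Fin n, Ec p (⟨0, by omega⟩, s) = Vc p s := by
        intro p
        rw [hEc, hVc]
        simp only [Matrix.map_apply, vKronC, Matrix.of_apply, hE]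
        show algebraMap ℝ ℂ (extCols n k v B p (⟨0, by omega⟩, s)) = _
        simp only [extCols, Matrix.of_apply]
        rw [dif_pos (by trivial)]
        split_ifs <;> simp
      simp only [Matrix.vecMul, dotProduct]
      rw [Finset.sum_congr rfl fun p _ => by rw [hcolE p]]
      have := congrFun huv s
      simpa [Matrix.vecMul, dotProduct] using this
    have hy : Matrix.vecMul u Ec = 0 := Fnull hk ha α Pm _ hy0 hyF
    exact hcancel hdetEc hy
  -- linear algebra: an injective endomorphism of ker is surjective
  set S1 : Submodule ℂ (Fin n → ℂ) := LinearMap.ker (Matrix.vecMulLinear P0) with hS1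
  have hmem : ∀ w' : Fin n → ℂ, w' ∈ S1 ↔ Matrix.vecMul w' P0 = 0 := by
    intro w'
    rw [hS1, LinearMap.mem_ker, Matrix.vecMulLinear_apply]
  set T : (Fin n → ℂ) →ₗ[ℂ] (Fin n → ℂ) :=
    (Matrix.vecMulLinear Vc).comp ((Matrix.vecMulLinear Uc).comp (Matrix.vecMulLinear Zm))
    with hT
  have hTapp : ∀ w' : Fin n → ℂ,
      T w' = Matrix.vecMul (Matrix.vecMul (Matrix.vecMul w' Zm) Uc) Vc := fun _ => rfl
  have hVP : Vc * P0 = Ac * evalC α (PhiMat n k φ) := by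
    have h1 : Ac * evalC α (PhiMat n k φ) = evalC α (vKron n k v (matP n k φ Pm)) := by
      rw [hAcdef, ← evalC_mul, hv]
    rw [h1]
    refine Matrix.ext fun p s => ?_
    rw [Matrix.mul_apply]
    have h2 : ∀ t : Fin n, Vc p t * P0 t s
        = if p.2 = t then (algebraMap ℝ ℂ (v p.1)) * P0 t s else 0 := by
      intro t
      rw [hVc]
      simp only [vKronC, Matrix.of_apply]
      split_ifs <;> simp [Complex.coe_algebraMap]
    simp_rw [h2]
    rw [Finset.sum_ite_eq Finset.univ p.2 (fun t => (algebraMap ℝ ℂ (v p.1)) * P0 t s),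
      if_pos (Finset.mem_univ _)]
    simp only [hP0, evalC, vKron, Matrix.of_apply, _root_.map_mul, aeval_C]
  have hTmaps : ∀ w' ∈ S1, T w' ∈ S1 := by
    intro w' hw'
    rw [hmem] at hw' ⊢
    rw [hTapp, Matrix.vecMul_vecMul, hVP, ← Matrix.vecMul_vecMul, hS2 w' hw',
      Matrix.zero_vecMul]
  set Tres := T.restrict hTmaps with hTres
  have hinjres : Function.Injective Tres := by
    have hker : ∀ x : S1, Tres x = 0 → x = 0 := by
      rintro ⟨w', hw'⟩ hx
      have hw'0 : Matrix.vecMul w' P0 = 0 := (hmem w').mp hw'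
      have hTw' : T w' = 0 := Subtype.ext_iff.mp hx
      have hu0 : Matrix.vecMul (Matrix.vecMul w' Zm) Uc = 0 := by
        refine hinjective _ (hS2 w' hw'0) ?_
        rw [← hTapp]
        exact hTw'
      have hz0 : Matrix.vecMul w' Zm = 0 := hcancel hdetUc hu0
      have hwz : w' = 0 := by
        funext s2
        have h4 := congrFun hz0 ((⟨0, by omega⟩ : Fin k), s2)
        rw [hzApp] at h4
        simpa [finvmk] using h4
      exact Subtype.ext hwz
    intro x1 x2 hx
    have h5 := hker (x1 - x2) (by rw [map_sub, hx, sub_self])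
    exact sub_eq_zero.mp h5
  have hsurj : Function.Surjective Tres := LinearMap.injective_iff_surjective.mp hinjres
  obtain ⟨⟨w', hw'⟩, hww⟩ := hsurj ⟨w, (hmem w).mpr hwP⟩
  have hTw : T w' = w := Subtype.ext_iff.mp hww
  rw [hTapp] at hTw
  refine ⟨Matrix.vecMul (Matrix.vecMul w' Zm) Uc, ?_, ?_, ?_⟩
  · intro h0
    apply hw0
    rw [h0, Matrix.zero_vecMul] at hTw
    exact hTw.symm
  · exact hS2 w' ((hmem w').mp hw')
  · exact hTw
end
end
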